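/- arXiv:1909.11411 — 8 statements merged into one kernel-verified Lean document; each statement's English description precedes it below -/
import Mathlib

section
/- Let (X, τ) be a real topological vector space and F : X → [-∞,+∞]. Then the lower semicontinuous envelope of the level convex envelope of F equals the lower semicontinuous level convex envelope of F, i.e. Γ_τ(F^{lc}) = F^{lslc} pointwise, and moreover F^{lslc} ≤ (Γ_τ(F))^{lc} pointwise. -/
open Filter Topology

variable {X : Type*}

/-- A function into the extended reals is level convex if along segments its value
is at most the maximum of the values at the endpoints. -/
def LevelConvex [AddCommGroup X] [Module ℝ X] (F : X → EReal) : Prop :=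
  ∀ x y : X, ∀ t : ℝ, 0 < t → t < 1 →
    F (t • x + (1 - t) • y) ≤ max (F x) (F y)

/-- The lower semicontinuous envelope `Γ_τ(F)`: the pointwise supremum of all
lower semicontinuous functions below `F`. -/
noncomputable def lscEnv [TopologicalSpace X] (F : X → EReal) : X → EReal :=
  fun x => ⨆ G : {G : X → EReal // LowerSemicontinuous G ∧ G ≤ F}, (G : X → EReal) x

/-- The level convex envelope `F^{lc}`: the pointwise supremum of all level convex
functions below `F`. -/
noncomputable def lcEnv [AddCommGroup X] [Module ℝ X] (F : X → EReal) : X → EReal :=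
  fun x => ⨆ G : {G : X → EReal // LevelConvex G ∧ G ≤ F}, (G : X → EReal) x

/-- The lower semicontinuous level convex envelope `F^{lslc}`: the pointwise supremum
of all functions below `F` which are both lower semicontinuous and level convex. -/
noncomputable def lslcEnv [TopologicalSpace X] [AddCommGroup X] [Module ℝ X]
    (F : X → EReal) : X → EReal :=
  fun x => ⨆ G : {G : X → EReal // LowerSemicontinuous G ∧ LevelConvex G ∧ G ≤ F},
    (G : X → EReal) x

/-!
The lower semicontinuous envelope is `x ↦ liminf F (𝓝 x)`. If `F` is level convex, the value of
this liminf at `t • x + (1 - t) • y` is controlled by the values of `F` on small product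
neighbourhoods of `(x, y)`, hence by the maximum of the liminfs at `x` and `y`; so `Γ_τ` preserves
level convexity. Therefore `Γ_τ(F^{lc})` is a lower semicontinuous level convex minorant of `F`,
and it dominates every such minorant `G` since `G ≤ F^{lc}` and `G` is lower semicontinuous.
-/

namespace Filter

variable {α β γ : Type*} [CompleteLinearOrder α] [DenselyOrdered α]

lemma liminf_max_prod_le {f : β → α} {g : γ → α} {l₁ : Filter β} {l₂ : Filter γ} :
    liminf (fun p => max (f p.1) (g p.2)) (l₁ ×ˢ l₂) ≤ max (liminf f l₁) (liminf g l₂) := by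
  refine le_of_forall_gt_imp_ge_of_dense fun c hc => liminf_le_of_frequently_le' ?_
  have hf : ∃ᶠ b in l₁, f b < c := frequently_lt_of_liminf_lt (h := (max_lt_iff.1 hc).1)
  have hg : ∃ᶠ b in l₂, g b < c := frequently_lt_of_liminf_lt (h := (max_lt_iff.1 hc).2)
  exact (frequently_prod_and.2 ⟨hf, hg⟩).mono fun p hp => (max_lt hp.1 hp.2).le

end Filter

section LevelConvex

variable [AddCommGroup X] [Module ℝ X]

lemma LevelConvex.iSup {ι : Sort*} {F : ι → X → EReal} (hF : ∀ i, LevelConvex (F i)) :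
    LevelConvex fun x => ⨆ i, F i x :=
  fun x y t ht ht' => iSup_le fun i =>
    (hF i x y t ht ht').trans (max_le_max (le_iSup (F · x) i) (le_iSup (F · y) i))

lemma lcEnv_le (F : X → EReal) : lcEnv F ≤ F :=
  fun x => iSup_le fun G => G.2.2 x

lemma le_lcEnv {F G : X → EReal} (hG : LevelConvex G) (hGF : G ≤ F) : G ≤ lcEnv F :=
  fun x => le_iSup (fun G : {G : X → EReal // LevelConvex G ∧ G ≤ F} =>
    (G : X → EReal) x) ⟨G, hG, hGF⟩

lemma levelConvex_lcEnv (F : X → EReal) : LevelConvex (lcEnv F) :=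
  LevelConvex.iSup fun G => G.2.1

end LevelConvex

section Semicontinuity

variable {α : Type*} [TopologicalSpace X] [CompleteLinearOrder α]

lemma liminf_nhds_le (F : X → α) (x : X) : liminf F (𝓝 x) ≤ F x :=
  liminf_le_of_frequently_le' <|
    (frequently_pure (p := (F · ≤ F x)).2 le_rfl).filter_mono (pure_le_nhds x)

lemma lowerSemicontinuous_liminf_nhds [DenselyOrdered α] (F : X → α) :
    LowerSemicontinuous fun x => liminf F (𝓝 x) := by
  intro x c hc
  obtain ⟨b, hcb, hb⟩ := exists_between hc
  filter_upwards [eventually_eventually_nhds.2 (eventually_lt_of_lt_liminf hb)] with x' hx'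
  exact hcb.trans_le (le_liminf_of_le (h := hx'.mono fun _ => le_of_lt))

end Semicontinuity

section Envelopes

variable [TopologicalSpace X]

lemma lscEnv_le (F : X → EReal) : lscEnv F ≤ F :=
  fun x => iSup_le fun G => G.2.2 x

lemma le_lscEnv {F G : X → EReal} (hG : LowerSemicontinuous G) (hGF : G ≤ F) :
    G ≤ lscEnv F :=
  fun x => le_iSup (fun G : {G : X → EReal // LowerSemicontinuous G ∧ G ≤ F} =>
    (G : X → EReal) x) ⟨G, hG, hGF⟩

lemma lowerSemicontinuous_lscEnv (F : X → EReal) : LowerSemicontinuous (lscEnv F) :=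
  lowerSemicontinuous_iSup fun G => G.2.1

lemma lscEnv_eq_liminf (F : X → EReal) : lscEnv F = fun x => liminf F (𝓝 x) := by
  refine le_antisymm (fun x => iSup_le fun G => ?_)
    (le_lscEnv (lowerSemicontinuous_liminf_nhds F) (liminf_nhds_le F))
  exact (G.2.1.le_liminf x).trans (liminf_le_liminf (.of_forall G.2.2))

variable [AddCommGroup X] [Module ℝ X]

lemma le_lslcEnv {F G : X → EReal} (hG : LowerSemicontinuous G) (hG' : LevelConvex G)
    (hGF : G ≤ F) : G ≤ lslcEnv F :=
  fun x => le_iSup (fun G : {G : X → EReal //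
    LowerSemicontinuous G ∧ LevelConvex G ∧ G ≤ F} => (G : X → EReal) x) ⟨G, hG, hG', hGF⟩

lemma LevelConvex.liminf_nhds [ContinuousAdd X] [ContinuousConstSMul ℝ X] {F : X → EReal}
    (hF : LevelConvex F) : LevelConvex fun x => liminf F (𝓝 x) := by
  intro x y t ht ht'
  let φ : X × X → X := fun p => t • p.1 + (1 - t) • p.2
  have hφ : Tendsto φ (𝓝 x ×ˢ 𝓝 y) (𝓝 (t • x + (1 - t) • y)) := by
    rw [← nhds_prod_eq]
    exact ((continuous_fst.const_smul t).add (continuous_snd.const_smul (1 - t))).tendsto _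
  calc liminf F (𝓝 (t • x + (1 - t) • y)) ≤ liminf (F ∘ φ) (𝓝 x ×ˢ 𝓝 y) :=
        hφ.liminf_le_liminf_comp
    _ ≤ liminf (fun p => max (F p.1) (F p.2)) (𝓝 x ×ˢ 𝓝 y) :=
        liminf_le_liminf (.of_forall fun p => hF p.1 p.2 t ht ht')
    _ ≤ max (liminf F (𝓝 x)) (liminf F (𝓝 y)) := liminf_max_prod_le

lemma LevelConvex.lscEnv [ContinuousAdd X] [ContinuousConstSMul ℝ X] {F : X → EReal}
    (hF : LevelConvex F) : LevelConvex (lscEnv F) := by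
  rw [lscEnv_eq_liminf]
  exact hF.liminf_nhds

end Envelopes

/-- `Γ_τ(F^{lc}) = F^{lslc}` and `F^{lslc} ≤ (Γ_τ(F))^{lc}`. -/
theorem stmt0 [TopologicalSpace X] [AddCommGroup X] [Module ℝ X]
    [IsTopologicalAddGroup X] [ContinuousSMul ℝ X] (F : X → EReal) :
    lscEnv (lcEnv F) = lslcEnv F ∧ lslcEnv F ≤ lcEnv (lscEnv F) := by
  have hlsc : LowerSemicontinuous (lscEnv (lcEnv F)) := lowerSemicontinuous_lscEnv _
  have hlc : LevelConvex (lscEnv (lcEnv F)) := (levelConvex_lcEnv F).lscEnv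
  have hle : lscEnv (lcEnv F) ≤ F := (lscEnv_le _).trans (lcEnv_le F)
  refine ⟨le_antisymm (le_lslcEnv hlsc hlc hle) fun x => iSup_le fun G => ?_,
    fun x => iSup_le fun G => ?_⟩
  · exact le_lscEnv G.2.1 (le_lcEnv G.2.2.1 G.2.2.2) x
  · exact le_lcEnv G.2.2.1 (le_lscEnv G.2.1 G.2.2.2) x
end

section
/- Let (X, τ) be a real topological vector space, F : X → [-∞,+∞], and let Φ : [-∞,+∞] → ℝ be continuous and strictly increasing with values in a compact interval [a,b]. Then: (i) Γ_τ(Φ∘F) = Φ∘Γ_τ(F); (ii) (Φ∘F)^{lc} = Φ∘(F^{lc}); (iii) (Φ∘F)^{lslc} = Φ∘(F^{lslc}), where each equality holds pointwise on X. -/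
/-!
Put `ψ = ((↑) : ℝ → EReal) ∘ Φ`. As `[-∞,+∞]` is a connected complete linear order, `ψ` is an
order isomorphism onto `[ψ ⊥, ψ ⊤]`; clamping to this interval and then inverting gives a
continuous monotone `θ` with `θ ∘ ψ = id` and `w ≤ ψ (θ w)` for `w ≤ ψ ⊤`. Composition with
continuous monotone maps preserves lower semicontinuity and level convexity, so `ψ ∘ ·` maps the
admissible minorants of `F` to those of `ψ ∘ F`, and `θ ∘ ·` maps them back. Since `ψ` commutes
with nonempty suprema, the two envelopes correspond under `ψ`.
-/

open Filter Topology

variable {X : Type*}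

open Set Function

section Inverse

variable {α β : Type*} [CompleteLinearOrder α] [DenselyOrdered α] [TopologicalSpace α]
  [OrderTopology α] [LinearOrder β] [TopologicalSpace β] [OrderTopology β] {ψ : α → β}

noncomputable def StrictMono.orderIsoIcc (hψ : StrictMono ψ) (hc : Continuous ψ) :
    α ≃o Icc (ψ ⊥) (ψ ⊤) :=
  (hψ.codRestrict (s := Icc (ψ ⊥) (ψ ⊤)) fun _ =>
    ⟨hψ.monotone bot_le, hψ.monotone le_top⟩).orderIsoOfSurjective _ fun w => by
    obtain ⟨z, -, hz⟩ := hc.continuousOn.surjOn_Icc (mem_univ ⊥) (mem_univ ⊤) w.2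
    exact ⟨z, Subtype.ext hz⟩

theorem StrictMono.exists_continuous_monotone_leftInverse (hψ : StrictMono ψ)
    (hc : Continuous ψ) :
    ∃ θ : β → α, Continuous θ ∧ Monotone θ ∧ LeftInverse θ ψ ∧ ∀ w ≤ ψ ⊤, w ≤ ψ (θ w) := by
  set e := hψ.orderIsoIcc hc
  have he : ∀ z, (e z : β) = ψ z := fun z => rfl
  refine ⟨IccExtend (hψ.monotone bot_le) e.symm, continuous_IccExtend_iff.mpr e.symm.continuous,
    e.symm.monotone.IccExtend _, fun z => ?_, fun w hw => ?_⟩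
  · rw [IccExtend_of_mem _ _ (⟨hψ.monotone bot_le, hψ.monotone le_top⟩ : ψ z ∈ Icc (ψ ⊥) (ψ ⊤))]
    exact e.symm_apply_eq.mpr (Subtype.ext (he z).symm)
  · rw [← he, IccExtend_apply, e.apply_symm_apply]
    exact (le_min hw le_rfl).trans (le_max_right _ _)

end Inverse

section Envelope

variable {α β : Type*}

def envelope [CompleteLattice α] (P : (X → α) → Prop) (F : X → α) : X → α :=
  fun x => ⨆ G : {G : X → α // P G ∧ G ≤ F}, (G : X → α) x

theorem le_envelope [CompleteLattice α] {P : (X → α) → Prop} {F G : X → α} (hG : P G)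
    (hGF : G ≤ F) : G ≤ envelope P F :=
  fun x => le_iSup (fun G : {G : X → α // P G ∧ G ≤ F} => (G : X → α) x) ⟨G, hG, hGF⟩

variable [CompleteLinearOrder α] [TopologicalSpace α] [OrderTopology α]
  [CompleteLinearOrder β] [TopologicalSpace β] [OrderTopology β]

theorem envelope_comp {P : (X → α) → Prop} {Q : (X → β) → Prop} {ψ : α → β} {θ : β → α}
    (hψc : Continuous ψ) (hψ : Monotone ψ) (hθ : Monotone θ) (hθψ : LeftInverse θ ψ)
    (hψθ : ∀ w ≤ ψ ⊤, w ≤ ψ (θ w)) (hbot : P fun _ => ⊥)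
    (hPQ : ∀ G, P G → Q (ψ ∘ G)) (hQP : ∀ H, Q H → P (θ ∘ H)) (F : X → α) :
    envelope Q (ψ ∘ F) = ψ ∘ envelope P F := by
  funext x
  apply le_antisymm
  · refine iSup_le fun ⟨H, hH, hHF⟩ => ?_
    have hθH : θ ∘ H ≤ F := fun y => hθψ (F y) ▸ hθ (hHF y)
    calc H x ≤ ψ (θ (H x)) := hψθ _ ((hHF x).trans (hψ le_top))
      _ ≤ ψ (envelope P F x) := hψ (le_envelope (hQP H hH) hθH x)
  · have : Nonempty {G : X → α // P G ∧ G ≤ F} := ⟨⟨fun _ => ⊥, hbot, fun _ => bot_le⟩⟩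
    rw [comp_apply, envelope, hψ.map_ciSup_of_continuousAt hψc.continuousAt]
    exact iSup_le fun ⟨G, hG, hGF⟩ =>
      le_envelope (hPQ G hG) (fun y => hψ (hGF y)) x

end Envelope

theorem lslcEnv_eq_envelope [TopologicalSpace X] [AddCommGroup X] [Module ℝ X] (F : X → EReal) :
    lslcEnv F = envelope (fun G => LowerSemicontinuous G ∧ LevelConvex G) F := by
  funext x
  exact ((Equiv.subtypeEquivRight fun _ => and_assoc).iSup_comp
    (g := fun G : {G : X → EReal // LowerSemicontinuous G ∧ LevelConvex G ∧ G ≤ F} => G.1 x)).symm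

theorem levelConvex_const [AddCommGroup X] [Module ℝ X] (c : EReal) :
    LevelConvex fun _ : X => c :=
  fun _ _ _ _ _ => le_max_left c c

theorem Monotone.comp_levelConvex [AddCommGroup X] [Module ℝ X] {f : EReal → EReal}
    (hf : Monotone f) {G : X → EReal} (hG : LevelConvex G) : LevelConvex (f ∘ G) :=
  fun x y t ht₀ ht₁ => (hf (hG x y t ht₀ ht₁)).trans_eq hf.map_max

theorem stmt3_general [TopologicalSpace X] [AddCommGroup X] [Module ℝ X]
    (F : X → EReal) (Φ : EReal → ℝ)
    (hcont : Continuous Φ) (hmono : StrictMono Φ) :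
    (lscEnv (fun x => ((Φ (F x) : ℝ) : EReal)) = fun x => ((Φ (lscEnv F x) : ℝ) : EReal)) ∧
    (lcEnv (fun x => ((Φ (F x) : ℝ) : EReal)) = fun x => ((Φ (lcEnv F x) : ℝ) : EReal)) ∧
    (lslcEnv (fun x => ((Φ (F x) : ℝ) : EReal)) = fun x => ((Φ (lslcEnv F x) : ℝ) : EReal)) := by
  set ψ : EReal → EReal := fun z => ((Φ z : ℝ) : EReal)
  have hψc : Continuous ψ := continuous_coe_real_ereal.comp hcont
  have hψ : StrictMono ψ := EReal.coe_strictMono.comp hmono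
  obtain ⟨θ, hθc, hθ, hθψ, hψθ⟩ := hψ.exists_continuous_monotone_leftInverse hψc
  have key (P : (X → EReal) → Prop) :=
    envelope_comp (P := P) (Q := P) hψc hψ.monotone hθ hθψ hψθ (F := F)
  refine ⟨key _ lowerSemicontinuous_const
      (fun _ hG => hψc.comp_lowerSemicontinuous hG hψ.monotone)
      (fun _ hH => hθc.comp_lowerSemicontinuous hH hθ),
    key _ (levelConvex_const ⊥) (fun _ => hψ.monotone.comp_levelConvex)
      (fun _ => hθ.comp_levelConvex), ?_⟩
  rw [lslcEnv_eq_envelope, lslcEnv_eq_envelope]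
  exact key _ ⟨lowerSemicontinuous_const, levelConvex_const ⊥⟩
    (fun _ hG => ⟨hψc.comp_lowerSemicontinuous hG.1 hψ.monotone,
      hψ.monotone.comp_levelConvex hG.2⟩)
    (fun _ hH => ⟨hθc.comp_lowerSemicontinuous hH.1 hθ, hθ.comp_levelConvex hH.2⟩)

/-- envelopes commute with composition by a continuous strictly increasing
function `Φ : [-∞,+∞] → [a,b] ⊆ ℝ`. -/
theorem stmt3 [TopologicalSpace X] [AddCommGroup X] [Module ℝ X]
    [IsTopologicalAddGroup X] [ContinuousSMul ℝ X]
    (F : X → EReal) (a b : ℝ) (Φ : EReal → ℝ)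
    (hcont : Continuous Φ) (hmono : StrictMono Φ)
    (hrange : ∀ z : EReal, Φ z ∈ Set.Icc a b) :
    (lscEnv (fun x => ((Φ (F x) : ℝ) : EReal)) = fun x => ((Φ (lscEnv F x) : ℝ) : EReal)) ∧
    (lcEnv (fun x => ((Φ (F x) : ℝ) : EReal)) = fun x => ((Φ (lcEnv F x) : ℝ) : EReal)) ∧
    (lslcEnv (fun x => ((Φ (F x) : ℝ) : EReal)) = fun x => ((Φ (lslcEnv F x) : ℝ) : EReal)) :=
  stmt3_general F Φ hcont hmono
end

section
/- Let X be a real vector space and F : X → [-∞,+∞]. Then for every x ∈ X, the level convex envelope of F satisfies F^{lc}(x) = inf { λ ∈ ℝ : x ∈ co(L_λ(F)) }, where co denotes the convex hull and the infimum of the empty set is +∞. -/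
open Filter Topology

variable {X : Type*}

lemma sublevel_convex [AddCommGroup X] [Module ℝ X] {H : X → EReal}
    (h : LevelConvex H) (c : EReal) : Convex ℝ {y : X | H y ≤ c} := by
  intro a ha b hb s t hs ht hst
  rcases eq_or_lt_of_le hs with h0 | h0
  · have ht1 : t = 1 := by linarith
    simp only [← h0, ht1, zero_smul, one_smul, zero_add]
    exact hb
  rcases eq_or_lt_of_le ht with h1 | h1
  · have hs1 : s = 1 := by linarith
    simp only [← h1, hs1, zero_smul, one_smul, add_zero]
    exact ha
  · have hs1 : s < 1 := by linarith
    have key := h a b s h0 hs1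
    have hteq : 1 - s = t := by linarith
    rw [hteq] at key
    exact le_trans key (max_le ha hb)

noncomputable def cvxEnv [AddCommGroup X] [Module ℝ X] (F : X → EReal) (z : X) : EReal :=
  ⨅ lam : {lam : ℝ // z ∈ convexHull ℝ {y : X | F y ≤ (lam : EReal)}}, ((lam : ℝ) : EReal)

lemma cvxEnv_mono_mem [AddCommGroup X] [Module ℝ X] (F : X → EReal) {p q : ℝ} (hpq : p ≤ q) :
    convexHull ℝ {y : X | F y ≤ (p : EReal)} ⊆ convexHull ℝ {y : X | F y ≤ (q : EReal)} :=
  convexHull_mono (fun y hy => le_trans hy (EReal.coe_le_coe_iff.mpr hpq))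

lemma cvxEnv_le [AddCommGroup X] [Module ℝ X] (F : X → EReal) : cvxEnv F ≤ F := by
  intro z
  by_contra h
  push_neg at h
  obtain ⟨c, hc1, hc2⟩ := EReal.exists_between_coe_real h
  have hz : z ∈ convexHull ℝ {y : X | F y ≤ (c : EReal)} :=
    subset_convexHull ℝ _ (le_of_lt hc1)
  exact absurd (iInf_le (fun lam : {lam : ℝ // z ∈ convexHull ℝ {y : X | F y ≤ (lam : EReal)}} =>
    ((lam : ℝ) : EReal)) ⟨c, hz⟩) (not_le.mpr hc2)

lemma cvxEnv_lc [AddCommGroup X] [Module ℝ X] (F : X → EReal) : LevelConvex (cvxEnv F) := by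
  intro a b t ht0 ht1
  by_contra h
  push_neg at h
  obtain ⟨c, hc1, hc2⟩ := EReal.exists_between_coe_real h
  have ha : cvxEnv F a < (c : EReal) := lt_of_le_of_lt (le_max_left _ _) hc1
  have hb : cvxEnv F b < (c : EReal) := lt_of_le_of_lt (le_max_right _ _) hc1
  obtain ⟨⟨lam, hla⟩, hlam⟩ := iInf_lt_iff.mp ha
  obtain ⟨⟨mu, hmb⟩, hmu⟩ := iInf_lt_iff.mp hb
  have ha' := cvxEnv_mono_mem F (le_max_left lam mu) hla
  have hb' := cvxEnv_mono_mem F (le_max_right lam mu) hmb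
  have hz : t • a + (1 - t) • b ∈ convexHull ℝ {y : X | F y ≤ ((max lam mu : ℝ) : EReal)} :=
    (convex_convexHull ℝ _) ha' hb' ht0.le (by linarith) (by ring)
  have h1 : cvxEnv F (t • a + (1 - t) • b) ≤ ((max lam mu : ℝ) : EReal) := by
    unfold cvxEnv
    exact iInf_le _ (⟨max lam mu, hz⟩ :
      {l : ℝ // t • a + (1 - t) • b ∈ convexHull ℝ {y : X | F y ≤ ((l : ℝ) : EReal)}})
  have h2 : ((max lam mu : ℝ) : EReal) < (c : EReal) := by
    have hl : lam < c := by exact_mod_cast hlam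
    have hm : mu < c := by exact_mod_cast hmu
    exact_mod_cast max_lt hl hm
  exact absurd (lt_of_le_of_lt h1 h2) (not_lt.mpr hc2.le)

/-- representation of the level convex envelope through convex hulls of
sublevel sets: `F^{lc}(x) = inf {λ ∈ ℝ : x ∈ co(L_λ(F))}` (the infimum over the empty set
being `+∞`). -/
theorem stmt4 [AddCommGroup X] [Module ℝ X] (F : X → EReal) (x : X) :
    lcEnv F x =
      ⨅ lam : {lam : ℝ // x ∈ convexHull ℝ {y : X | F y ≤ (lam : EReal)}},
        ((lam : ℝ) : EReal) := by
  refine le_antisymm (iSup_le ?_) ?_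
  · rintro ⟨H, hH, hHF⟩
    refine le_iInf ?_
    rintro ⟨lam, hx⟩
    have hsub : convexHull ℝ {y : X | F y ≤ (lam : EReal)} ⊆ {y : X | H y ≤ (lam : EReal)} :=
      convexHull_min (fun y hy => le_trans (hHF y) hy) (sublevel_convex hH _)
    exact hsub hx
  · exact le_iSup_of_le ⟨cvxEnv F, cvxEnv_lc F, cvxEnv_le F⟩ le_rfl
end

section
/- Let f : ℝ^{d×N} → [-∞,+∞]. Then the effective domain of the level convex envelope of f equals the convex hull of the effective domain of f: dom(f^{lc}) = co(dom f), where dom g := {ξ : g(ξ) < +∞}. -/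
open Filter Topology

variable {X : Type*}

/-- `dom(f^{lc}) = co(dom f)` for `f : ℝ^{d×N} → [-∞,+∞]`. -/
theorem stmt5 (d N : ℕ) (f : EuclideanSpace ℝ (Fin d × Fin N) → EReal) :
    {ξ | lcEnv f ξ < ⊤} = convexHull ℝ {ξ | f ξ < ⊤} := by
  set S : Set (EuclideanSpace ℝ (Fin d × Fin N)) := {ξ | f ξ < ⊤} with hS
  classical
  ext ξ
  constructor
  · -- if ξ ∉ co(S), the indicator of co(S) forces lcEnv f ξ = ⊤
    intro hξ
    by_contra hnot
    set G₀ : EuclideanSpace ℝ (Fin d × Fin N) → EReal :=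
      fun x => if x ∈ convexHull ℝ S then ⊥ else ⊤ with hG₀
    have hLC : LevelConvex G₀ := by
      intro x y t ht0 ht1
      by_cases hx : x ∈ convexHull ℝ S
      · by_cases hy : y ∈ convexHull ℝ S
        · have hmem : t • x + (1 - t) • y ∈ convexHull ℝ S :=
            (convex_convexHull ℝ S) hx hy ht0.le (by linarith) (by ring)
          simp [hG₀, hmem]
        · simp [hG₀, hy]
      · simp [hG₀, hx]
    have hle : G₀ ≤ f := by
      intro x
      by_cases hx : x ∈ convexHull ℝ S
      · simp [hG₀, hx]
      · have hxS : x ∉ S := fun h => hx (subset_convexHull ℝ S h)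
        have : f x = ⊤ := by
          simp only [hS, Set.mem_setOf_eq, not_lt, top_le_iff] at hxS
          exact hxS
        simp [hG₀, hx, this]
    have hge : G₀ ξ ≤ lcEnv f ξ :=
      le_iSup (fun G : {G : _ → EReal // LevelConvex G ∧ G ≤ f} => (G : _ → EReal) ξ)
        ⟨G₀, hLC, hle⟩
    have : G₀ ξ = ⊤ := by simp [hG₀, hnot]
    simp only [Set.mem_setOf_eq] at hξ
    rw [this] at hge
    exact absurd (lt_of_le_of_lt hge hξ) (lt_irrefl _)
  · intro hξ
    rw [convexHull_eq] at hξ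
    obtain ⟨ι, t, w, z, hw0, hw1, hz, hcm⟩ := hξ
    set r : EReal := t.sup fun i => f (z i) with hr
    have hrtop : r < ⊤ := by
      rw [hr, Finset.sup_lt_iff (show (⊥ : EReal) < ⊤ by simp)]
      intro i hi
      exact hz i hi
    have hbound : lcEnv f ξ ≤ r := by
      apply iSup_le
      rintro ⟨G, hG, hGf⟩
      -- the sublevel set of G at level r is convex
      have hconv : Convex ℝ {x | G x ≤ r} := by
        intro x hx y hy a b ha hb hab
        rcases eq_or_lt_of_le ha with ha0 | ha0
        · have hb1 : b = 1 := by linarith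
          simp only [← ha0, hb1, zero_smul, one_smul, zero_add]
          exact hy
        rcases eq_or_lt_of_le hb with hb0 | hb0
        · have ha1 : a = 1 := by linarith
          simp only [← hb0, ha1, zero_smul, one_smul, add_zero]
          exact hx
        have ha1 : a < 1 := by linarith
        have hbeq : b = 1 - a := by linarith
        have := hG x y a ha0 ha1
        rw [← hbeq] at this
        exact le_trans this (max_le hx hy)
      have hmem : ξ ∈ {x | G x ≤ r} := by
        rw [← hcm]
        apply hconv.centerMass_mem hw0 (by rw [hw1]; norm_num)
        intro i hi
        exact le_trans (hGf (z i)) (Finset.le_sup (f := fun i => f (z i)) hi)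
      exact hmem
    exact lt_of_le_of_lt hbound hrtop
end

section
/- Let f : ℝ^{d×N} → [-∞,+∞]. Then for every λ ∈ ℝ, the sublevel set of the lower semicontinuous level convex envelope of f satisfies L_λ(f^{lslc}) = ⋂_{ε>0} closure( co( L_{λ+ε}(f) ) ). -/
open Filter Topology

variable {X : Type*}

private lemma levelConvex_sublevel_convex {X : Type*} [AddCommGroup X] [Module ℝ X]
    {G : X → EReal} (hG : LevelConvex G) (c : EReal) :
    Convex ℝ {y | G y ≤ c} := by
  intro x hx y hy a b ha hb hab
  rcases eq_or_lt_of_le ha with ha0 | ha0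
  · have : b = 1 := by linarith
    simp only [← ha0, this, zero_smul, one_smul, zero_add]
    exact hy
  rcases eq_or_lt_of_le hb with hb0 | hb0
  · have : a = 1 := by linarith
    simp only [← hb0, this, zero_smul, one_smul, add_zero]
    exact hx
  have hb' : b = 1 - a := by linarith
  have := hG x y a ha0 (by linarith)
  rw [hb']
  exact le_trans this (max_le hx hy)

/-- `L_λ(f^{lslc}) = ⋂_{ε>0} closure(co(L_{λ+ε}(f)))` for every real `λ`. -/
theorem stmt9 (d N : ℕ) (f : EuclideanSpace ℝ (Fin d × Fin N) → EReal) (lam : ℝ) :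
    {ξ | lslcEnv f ξ ≤ (lam : EReal)} =
      ⋂ ε : ℝ, ⋂ (_ : 0 < ε),
        closure (convexHull ℝ {ξ | f ξ ≤ ((lam + ε : ℝ) : EReal)}) := by
  ext x
  simp only [Set.mem_setOf_eq, Set.mem_iInter]
  constructor
  · -- LHS ⊆ RHS
    intro hx ε hε
    by_contra hxC
    set C := closure (convexHull ℝ {ξ | f ξ ≤ ((lam + ε : ℝ) : EReal)}) with hCdef
    classical
    set G : EuclideanSpace ℝ (Fin d × Fin N) → EReal :=
      fun y => if y ∈ C then ⊥ else ((lam + ε : ℝ) : EReal) with hGdef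
    have hGtop : ∀ y, G y ≤ ((lam + ε : ℝ) : EReal) := by
      intro y; by_cases h : y ∈ C <;> simp [hGdef, h]
    have hlsc : LowerSemicontinuous G := by
      intro z μ hμ
      by_cases hz : z ∈ C
      · simp [hGdef, hz] at hμ
      · have hopen : IsOpen Cᶜ := isClosed_closure.isOpen_compl
        filter_upwards [hopen.mem_nhds hz] with y hy
        have hy' : y ∉ C := hy
        have : G y = ((lam + ε : ℝ) : EReal) := by simp [hGdef, hy']
        rw [this]
        have : G z = ((lam + ε : ℝ) : EReal) := by simp [hGdef, hz]
        rwa [this] at hμ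
    have hconvC : Convex ℝ C := (convex_convexHull ℝ _).closure
    have hlc : LevelConvex G := by
      intro a b t ht ht1
      by_cases ha : a ∈ C
      · by_cases hb : b ∈ C
        · have : t • a + (1 - t) • b ∈ C :=
            hconvC ha hb (le_of_lt ht) (by linarith) (by ring)
          simp [hGdef, this]
        · have : G b = ((lam + ε : ℝ) : EReal) := by simp [hGdef, hb]
          calc G (t • a + (1 - t) • b) ≤ ((lam + ε : ℝ) : EReal) := hGtop _
            _ = G b := this.symm
            _ ≤ max (G a) (G b) := le_max_right _ _
      · have : G a = ((lam + ε : ℝ) : EReal) := by simp [hGdef, ha]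
        calc G (t • a + (1 - t) • b) ≤ ((lam + ε : ℝ) : EReal) := hGtop _
          _ = G a := this.symm
          _ ≤ max (G a) (G b) := le_max_left _ _
    have hle : G ≤ f := by
      intro y
      by_cases hy : y ∈ C
      · simp [hGdef, hy]
      · have hny : y ∉ {ξ | f ξ ≤ ((lam + ε : ℝ) : EReal)} := by
          intro hmem
          exact hy (subset_closure (subset_convexHull ℝ _ hmem))
        have : ((lam + ε : ℝ) : EReal) < f y := lt_of_not_ge hny
        simp only [hGdef, if_neg hy]
        exact this.le
    have hGx : G x = ((lam + ε : ℝ) : EReal) := by simp [hGdef, hxC]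
    have hGle : G x ≤ lslcEnv f x :=
      le_iSup (fun (H : {G : _ → EReal // LowerSemicontinuous G ∧ LevelConvex G ∧ G ≤ f}) =>
        (H : _ → EReal) x) ⟨G, hlsc, hlc, hle⟩
    have : ((lam + ε : ℝ) : EReal) ≤ (lam : EReal) := hGx ▸ hGle.trans hx
    have : lam + ε ≤ lam := by exact_mod_cast this
    linarith
  · -- RHS ⊆ LHS
    intro hx
    apply iSup_le
    rintro ⟨G, hlsc, hlc, hle⟩
    simp only
    by_contra h
    push_neg at h
    obtain ⟨r, hr1, hr2⟩ := EReal.lt_iff_exists_real_btwn.mp h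
    have hε : 0 < r - lam := by
      have : lam < r := by exact_mod_cast hr1
      linarith
    have hxc := hx (r - lam) hε
    have hsub : {ξ | f ξ ≤ ((lam + (r - lam) : ℝ) : EReal)} ⊆ {y | G y ≤ (r : EReal)} := by
      intro y hy
      have : (lam + (r - lam) : ℝ) = r := by ring
      rw [this] at hy
      exact (hle y).trans hy
    have hclosed : IsClosed {y | G y ≤ (r : EReal)} :=
      hlsc.isClosed_preimage (r : EReal)
    have hconv : Convex ℝ {y | G y ≤ (r : EReal)} :=
      levelConvex_sublevel_convex hlc _
    have : x ∈ {y | G y ≤ (r : EReal)} :=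
      closure_minimal (convexHull_min hsub hconv) hclosed hxc
    exact absurd this.out (not_le.mpr hr2)
end

section
/- Let f : ℝ^{d×N} → ℝ be a Borel function with f(ξ) ≥ α|ξ| for some α > 0 and all ξ. For p ≥ 1 let (f^p)^{**} denote the greatest lower semicontinuous convex function below f^p. Then for every ξ ∈ ℝ^{d×N}, the map p ↦ ((f^p)^{**}(ξ))^{1/p} is nondecreasing on [1,∞) and lim_{p→∞} ((f^p)^{**}(ξ))^{1/p} = sup_{p≥1} ((f^p)^{**}(ξ))^{1/p} = f^{lslc}(ξ). -/
open Filter Topology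

variable {X : Type*}

/-- Convexity for extended-real-valued functions:
`h(tx+(1-t)y) ≤ t·h(x) + (1-t)·h(y)`. -/
def ERealConvexFn [AddCommGroup X] [Module ℝ X] (h : X → EReal) : Prop :=
  ∀ x y : X, ∀ t : ℝ, 0 < t → t < 1 →
    h (t • x + (1 - t) • y) ≤ ((t : ℝ) : EReal) * h x + (((1 - t : ℝ)) : EReal) * h y

/-- The greatest lower semicontinuous convex function below `g` (the biconjugate
`g^{**}`), defined as the pointwise supremum of all convex lower semicontinuous
minorants of `g`. -/
noncomputable def convLscEnv [TopologicalSpace X] [AddCommGroup X] [Module ℝ X]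
    (g : X → EReal) : X → EReal :=
  fun x => ⨆ h : {h : X → EReal // ERealConvexFn h ∧ LowerSemicontinuous h ∧ h ≤ g},
    (h : X → EReal) x

open Set

section Aux

variable {E : Type*} [NormedAddCommGroup E] [NormedSpace ℝ E]

lemma convLscEnv_le (g : E → EReal) (x : E) : convLscEnv g x ≤ g x :=
  iSup_le fun h => h.2.2.2 x

lemma le_convLscEnv {g h : E → EReal} (h1 : ERealConvexFn h)
    (h2 : LowerSemicontinuous h) (h3 : h ≤ g) (x : E) : h x ≤ convLscEnv g x :=
  le_iSup (fun h : {h : E → EReal // ERealConvexFn h ∧ LowerSemicontinuous h ∧ h ≤ g} =>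
    (h : E → EReal) x) ⟨h, h1, h2, h3⟩

lemma convLscEnv_mono {g₁ g₂ : E → EReal} (hle : g₁ ≤ g₂) (x : E) :
    convLscEnv g₁ x ≤ convLscEnv g₂ x := by
  refine iSup_le ?_
  rintro ⟨h, hc, hl, hm⟩
  exact le_convLscEnv hc hl (hm.trans hle) x

lemma ERealConvexFn_convLscEnv (g : E → EReal) : ERealConvexFn (convLscEnv g) := by
  intro x y t ht ht1
  refine iSup_le ?_
  rintro ⟨h, hc, hl, hle⟩
  refine (hc x y t ht ht1).trans (add_le_add ?_ ?_)
  · exact mul_le_mul_of_nonneg_left (le_convLscEnv hc hl hle x) (EReal.coe_nonneg.2 ht.le)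
  · exact mul_le_mul_of_nonneg_left (le_convLscEnv hc hl hle y)
      (EReal.coe_nonneg.2 (by linarith))

lemma lsc_convLscEnv (g : E → EReal) : LowerSemicontinuous (convLscEnv g) :=
  lowerSemicontinuous_iSup fun h => h.2.2.1

lemma ERealConvexFn_coe {φ : E → ℝ}
    (h : ∀ x y : E, ∀ t : ℝ, 0 < t → t < 1 →
      φ (t • x + (1 - t) • y) ≤ t * φ x + (1 - t) * φ y) :
    ERealConvexFn (fun x => ((φ x : ℝ) : EReal)) := by
  intro x y t ht ht1
  have := h x y t ht ht1
  rw [← EReal.coe_mul, ← EReal.coe_mul, ← EReal.coe_add]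
  exact EReal.coe_le_coe_iff.2 this

lemma lsc_coe {φ : E → ℝ} (h : LowerSemicontinuous φ) :
    LowerSemicontinuous (fun x => ((φ x : ℝ) : EReal)) :=
  continuous_coe_real_ereal.comp_lowerSemicontinuous h
    (fun _ _ hab => EReal.coe_le_coe_iff.2 hab)

lemma ERealConvexFn_zero : ERealConvexFn (fun _ : E => (0 : EReal)) := by
  intro x y t ht ht1
  simp

end Aux

section EnvR

variable {E : Type*} [NormedAddCommGroup E] [NormedSpace ℝ E]

/-- The real-valued convex lsc envelope of a nonnegative real function. -/
noncomputable def envR (g : E → ℝ) : E → ℝ :=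
  fun x => (convLscEnv (fun y => ((g y : ℝ) : EReal)) x).toReal

variable {g : E → ℝ}

lemma envC_nonneg (hg : ∀ x, 0 ≤ g x) (x : E) :
    (0 : EReal) ≤ convLscEnv (fun y => ((g y : ℝ) : EReal)) x := by
  have h0 : (fun _ : E => (0 : EReal)) ≤ fun y => ((g y : ℝ) : EReal) :=
    fun y => EReal.coe_nonneg.2 (hg y)
  exact le_convLscEnv ERealConvexFn_zero lowerSemicontinuous_const h0 x

lemma envC_ne_bot (hg : ∀ x, 0 ≤ g x) (x : E) :
    convLscEnv (fun y => ((g y : ℝ) : EReal)) x ≠ ⊥ :=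
  fun h => by simpa [h] using envC_nonneg hg x

lemma envC_ne_top (x : E) :
    convLscEnv (fun y => ((g y : ℝ) : EReal)) x ≠ ⊤ := by
  intro h
  have := convLscEnv_le (fun y => ((g y : ℝ) : EReal)) x
  rw [h] at this
  exact (EReal.coe_lt_top (g x)).not_ge this

lemma coe_envR (hg : ∀ x, 0 ≤ g x) (x : E) :
    ((envR g x : ℝ) : EReal) = convLscEnv (fun y => ((g y : ℝ) : EReal)) x :=
  EReal.coe_toReal (envC_ne_top x) (envC_ne_bot hg x)

lemma envR_nonneg (hg : ∀ x, 0 ≤ g x) (x : E) : 0 ≤ envR g x := by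
  have := envC_nonneg hg x
  rw [← coe_envR hg x] at this
  exact_mod_cast this

lemma envR_le (hg : ∀ x, 0 ≤ g x) (x : E) : envR g x ≤ g x := by
  have := convLscEnv_le (fun y => ((g y : ℝ) : EReal)) x
  rw [← coe_envR hg x] at this
  exact_mod_cast this

lemma envR_mono {g₂ : E → ℝ} (hg : ∀ x, 0 ≤ g x) (hg₂ : ∀ x, 0 ≤ g₂ x)
    (hle : ∀ x, g x ≤ g₂ x) (x : E) : envR g x ≤ envR g₂ x := by
  have := convLscEnv_mono (g₁ := fun y => ((g y : ℝ) : EReal))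
    (g₂ := fun y => ((g₂ y : ℝ) : EReal)) (fun y => EReal.coe_le_coe_iff.2 (hle y)) x
  rw [← coe_envR hg x, ← coe_envR hg₂ x] at this
  exact_mod_cast this

lemma le_envR (hg : ∀ x, 0 ≤ g x) {h : E → ℝ}
    (hconv : ∀ x y : E, ∀ t : ℝ, 0 < t → t < 1 →
      h (t • x + (1 - t) • y) ≤ t * h x + (1 - t) * h y)
    (hlsc : LowerSemicontinuous h) (hle : ∀ x, h x ≤ g x) (x : E) :
    h x ≤ envR g x := by
  have := le_convLscEnv (g := fun y => ((g y : ℝ) : EReal))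
    (ERealConvexFn_coe hconv) (lsc_coe hlsc) (fun y => EReal.coe_le_coe_iff.2 (hle y)) x
  rw [← coe_envR hg x] at this
  exact_mod_cast this

lemma envR_convex (hg : ∀ x, 0 ≤ g x) (x y : E) (t : ℝ) (ht : 0 < t) (ht1 : t < 1) :
    envR g (t • x + (1 - t) • y) ≤ t * envR g x + (1 - t) * envR g y := by
  have := ERealConvexFn_convLscEnv (fun y => ((g y : ℝ) : EReal)) x y t ht ht1
  rw [← coe_envR hg x, ← coe_envR hg y, ← coe_envR hg (t • x + (1 - t) • y),
    ← EReal.coe_mul, ← EReal.coe_mul, ← EReal.coe_add] at this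
  exact_mod_cast this

lemma envR_lsc (hg : ∀ x, 0 ≤ g x) : LowerSemicontinuous (envR g) := by
  intro x c hc
  have h1 : ((c : ℝ) : EReal) < convLscEnv (fun y => ((g y : ℝ) : EReal)) x := by
    rw [← coe_envR hg x]; exact_mod_cast hc
  filter_upwards [lsc_convLscEnv (fun y => ((g y : ℝ) : EReal)) x _ h1] with z hz
  rw [← coe_envR hg z] at hz
  exact_mod_cast hz

end EnvR

section Rpow

variable {E : Type*} [NormedAddCommGroup E] [NormedSpace ℝ E]

lemma lsc_rpow {g : E → ℝ} (hg : ∀ x, 0 ≤ g x) (hl : LowerSemicontinuous g)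
    {r : ℝ} (hr : 0 < r) : LowerSemicontinuous fun x => g x ^ r := by
  intro x c hc
  rcases lt_or_ge c 0 with h | h
  · filter_upwards with y using h.trans_le (Real.rpow_nonneg (hg y) r)
  · have hinv : (1 / r) * r = 1 := by field_simp
    have hgx : c ^ (1 / r) < g x := by
      by_contra hle
      push_neg at hle
      have h2 := Real.rpow_le_rpow (hg x) hle hr.le
      rw [← Real.rpow_mul h, hinv, Real.rpow_one] at h2
      exact hc.not_ge h2
    filter_upwards [hl x _ hgx] with y hy
    have h3 : (c ^ (1 / r)) ^ r < g y ^ r :=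
      Real.rpow_lt_rpow (Real.rpow_nonneg h _) hy hr
    rwa [← Real.rpow_mul h, hinv, Real.rpow_one] at h3

lemma combo_le_max (a b t : ℝ) (ht : 0 ≤ t) (ht1 : t ≤ 1) :
    t * a + (1 - t) * b ≤ max a b := by
  rcases le_total a b with h | h
  · calc t * a + (1 - t) * b ≤ t * b + (1 - t) * b := by nlinarith
      _ = b := by ring
      _ ≤ max a b := le_max_right _ _
  · calc t * a + (1 - t) * b ≤ t * a + (1 - t) * a := by nlinarith
      _ = a := by ring
      _ ≤ max a b := le_max_left _ _

lemma convex_sublevel {G : E → ℝ}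
    (hlevel : ∀ x y : E, ∀ t : ℝ, 0 < t → t < 1 →
      G (t • x + (1 - t) • y) ≤ max (G x) (G y)) (r : ℝ) :
    Convex ℝ {x | G x ≤ r} := by
  intro x hx y hy a b ha hb hab
  rcases eq_or_lt_of_le ha with h0 | ha'
  · have hb1 : b = 1 := by linarith
    simp only [← h0, hb1, zero_smul, one_smul, zero_add, mem_setOf_eq]
    exact hy
  · rcases eq_or_lt_of_le hb with h0' | hb'
    · have ha1 : a = 1 := by linarith
      simp only [← h0', ha1, zero_smul, one_smul, add_zero, mem_setOf_eq]
      exact hx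
    · have hb2 : b = 1 - a := by linarith
      have := hlevel x y a ha' (by linarith)
      rw [hb2]
      exact this.trans (max_le hx hy)

end Rpow

section Steps

variable {E : Type*} [NormedAddCommGroup E] [NormedSpace ℝ E]
variable {f : E → ℝ}

lemma fp_nonneg (hf0 : ∀ x, 0 ≤ f x) (p : ℝ) : ∀ x, 0 ≤ f x ^ p :=
  fun x => Real.rpow_nonneg (hf0 x) p

lemma mono_term (hf0 : ∀ x, 0 ≤ f x) {p q : ℝ} (hp : 1 ≤ p) (hpq : p ≤ q) (ξ : E) :
    envR (fun η => f η ^ p) ξ ^ (1 / p) ≤ envR (fun η => f η ^ q) ξ ^ (1 / q) := by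
  have hp0 : (0 : ℝ) < p := lt_of_lt_of_le one_pos hp
  have hq0 : (0 : ℝ) < q := lt_of_lt_of_le hp0 hpq
  set u : E → ℝ := envR (fun η => f η ^ p) with hu
  set r : ℝ := q / p with hrdef
  have hr : 1 ≤ r := (one_le_div hp0).2 hpq
  have hr0 : (0 : ℝ) ≤ r := le_trans zero_le_one hr
  have hu0 : ∀ x, 0 ≤ u x := envR_nonneg (fp_nonneg hf0 p)
  have hpr : p * r = q := by rw [hrdef]; field_simp
  have hHle : ∀ η, u η ^ r ≤ f η ^ q := by
    intro η
    have h1 : u η ≤ f η ^ p := envR_le (fp_nonneg hf0 p) η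
    have h2 := Real.rpow_le_rpow (hu0 η) h1 hr0
    rwa [← Real.rpow_mul (hf0 η), hpr] at h2
  have hHconv : ∀ x y : E, ∀ t : ℝ, 0 < t → t < 1 →
      u (t • x + (1 - t) • y) ^ r ≤ t * u x ^ r + (1 - t) * u y ^ r := by
    intro x y t ht ht1
    have h2 := envR_convex (fp_nonneg hf0 p) x y t ht ht1
    have h3 : u (t • x + (1 - t) • y) ^ r ≤ (t * u x + (1 - t) * u y) ^ r :=
      Real.rpow_le_rpow (hu0 _) h2 hr0
    have h4 := (convexOn_rpow hr).2 (mem_Ici.2 (hu0 x)) (mem_Ici.2 (hu0 y))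
      ht.le (by linarith : (0:ℝ) ≤ 1 - t) (by ring)
    exact h3.trans h4
  have hmain : u ξ ^ r ≤ envR (fun η => f η ^ q) ξ :=
    le_envR (fp_nonneg hf0 q) hHconv
      (lsc_rpow hu0 (envR_lsc (fp_nonneg hf0 p)) (lt_of_lt_of_le zero_lt_one hr))
      hHle ξ
  have hfin : u ξ ^ (1 / p) = (u ξ ^ r) ^ (1 / q) := by
    rw [← Real.rpow_mul (hu0 ξ)]
    congr 1
    rw [hrdef]
    field_simp
  rw [hfin]
  exact Real.rpow_le_rpow (Real.rpow_nonneg (hu0 ξ) r) hmain (by positivity)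

lemma term_le_lslc (hf0 : ∀ x, 0 ≤ f x) {p : ℝ} (hp : 1 ≤ p) (ξ : E) :
    ((envR (fun η => f η ^ p) ξ ^ (1 / p) : ℝ) : EReal) ≤
      lslcEnv (fun η => ((f η : ℝ) : EReal)) ξ := by
  have hp0 : (0 : ℝ) < p := lt_of_lt_of_le one_pos hp
  set u : E → ℝ := envR (fun η => f η ^ p) with hu
  have hu0 : ∀ x, 0 ≤ u x := envR_nonneg (fp_nonneg hf0 p)
  set Gp : E → EReal := fun η => ((u η ^ (1 / p) : ℝ) : EReal) with hGp
  have hlsc : LowerSemicontinuous Gp :=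
    lsc_coe (lsc_rpow hu0 (envR_lsc (fp_nonneg hf0 p)) (by positivity))
  have hlc : LevelConvex Gp := by
    intro x y t ht ht1
    have h2 : u (t • x + (1 - t) • y) ≤ max (u x) (u y) :=
      (envR_convex (fp_nonneg hf0 p) x y t ht ht1).trans
        (combo_le_max _ _ _ ht.le ht1.le)
    have h3 : u (t • x + (1 - t) • y) ^ (1 / p) ≤ max (u x) (u y) ^ (1 / p) :=
      Real.rpow_le_rpow (hu0 _) h2 (by positivity)
    rcases le_total (u x) (u y) with h | h
    · rw [max_eq_right h] at h3
      exact le_max_of_le_right (EReal.coe_le_coe_iff.2 h3)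
    · rw [max_eq_left h] at h3
      exact le_max_of_le_left (EReal.coe_le_coe_iff.2 h3)
  have hle : Gp ≤ fun η => ((f η : ℝ) : EReal) := by
    intro η
    have h1 : u η ≤ f η ^ p := envR_le (fp_nonneg hf0 p) η
    have h2 := Real.rpow_le_rpow (hu0 η) h1 (by positivity : (0:ℝ) ≤ 1 / p)
    rw [← Real.rpow_mul (hf0 η), mul_one_div, div_self (ne_of_gt hp0),
      Real.rpow_one] at h2
    exact EReal.coe_le_coe_iff.2 h2
  exact le_iSup (fun G : {G : E → EReal // LowerSemicontinuous G ∧ LevelConvex G ∧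
    G ≤ fun η => ((f η : ℝ) : EReal)} => (G : E → EReal) ξ) ⟨Gp, hlsc, hlc, hle⟩

end Steps

section Hull

variable {E : Type*} [NormedAddCommGroup E] [NormedSpace ℝ E]

lemma Ep_exists (g : E → ℝ) (hg : ∀ x, 0 ≤ g x) :
    ∃ h : E → ℝ, (∀ x, 0 ≤ h x) ∧ (∀ x, h x ≤ g x) ∧
      (∀ x y : E, ∀ t : ℝ, 0 < t → t < 1 →
        h (t • x + (1 - t) • y) ≤ t * h x + (1 - t) * h y) ∧
      LowerSemicontinuous h ∧
      (∀ x, (x, h x) ∈ closure (convexHull ℝ {q : E × ℝ | g q.1 ≤ q.2})) := by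
  classical
  set S : Set (E × ℝ) := closure (convexHull ℝ {q : E × ℝ | g q.1 ≤ q.2}) with hS
  have hSconv : Convex ℝ S := (convex_convexHull ℝ _).closure
  have hSclosed : IsClosed S := isClosed_closure
  have hSnonneg : ∀ q ∈ S, (0 : ℝ) ≤ q.2 := by
    have hconv : Convex ℝ {q : E × ℝ | 0 ≤ q.2} := by
      intro q hq q' hq' a b ha hb hab
      simp only [mem_setOf_eq, Prod.snd_add, Prod.smul_snd, smul_eq_mul] at *
      exact add_nonneg (mul_nonneg ha hq) (mul_nonneg hb hq')
    have hclosed : IsClosed {q : E × ℝ | 0 ≤ q.2} :=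
      isClosed_le continuous_const continuous_snd
    intro q hq
    exact closure_minimal
      (convexHull_min (fun q' hq' => le_trans (hg q'.1) hq') hconv) hclosed hq
  have hself : ∀ x : E, (x, g x) ∈ S :=
    fun x => subset_closure (subset_convexHull ℝ _ (le_refl (g x)))
  have hAne : ∀ x : E, {μ : ℝ | (x, μ) ∈ S}.Nonempty := fun x => ⟨g x, hself x⟩
  have hAbdd : ∀ x : E, BddBelow {μ : ℝ | (x, μ) ∈ S} :=
    fun x => ⟨0, fun μ hμ => hSnonneg _ hμ⟩
  have hAclosed : ∀ x : E, IsClosed {μ : ℝ | (x, μ) ∈ S} := by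
    intro x
    have : {μ : ℝ | (x, μ) ∈ S} = (fun μ : ℝ => ((x, μ) : E × ℝ)) ⁻¹' S := rfl
    rw [this]
    exact hSclosed.preimage (Continuous.prodMk_right x)
  set h : E → ℝ := fun x => sInf {μ : ℝ | (x, μ) ∈ S} with hh
  have hmem : ∀ x, (x, h x) ∈ S :=
    fun x => (hAclosed x).csInf_mem (hAne x) (hAbdd x)
  have hnonneg : ∀ x, 0 ≤ h x := fun x => hSnonneg _ (hmem x)
  have hle : ∀ x, h x ≤ g x := fun x => csInf_le (hAbdd x) (hself x)
  refine ⟨h, hnonneg, hle, ?_, ?_, hmem⟩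
  · intro x y t ht ht1
    have h1 := hSconv (hmem x) (hmem y) ht.le (by linarith : (0:ℝ) ≤ 1 - t)
      (by ring)
    have h2 : t • ((x, h x) : E × ℝ) + (1 - t) • ((y, h y) : E × ℝ) =
        ((t • x + (1 - t) • y, t * h x + (1 - t) * h y) : E × ℝ) := by
      simp [Prod.ext_iff, smul_eq_mul]
    rw [h2] at h1
    exact csInf_le (hAbdd _) h1
  · intro x c hc
    by_contra hcon
    rw [Filter.not_eventually] at hcon
    have hseq : ∀ n : ℕ, ∃ y : E, dist y x < 1 / (n + 1) ∧ h y ≤ c := by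
      intro n
      obtain ⟨y, hy1, hy2⟩ := (hcon.and_eventually
        (Metric.ball_mem_nhds x (by positivity : (0:ℝ) < 1 / (n + 1)))).exists
      exact ⟨y, by simpa [Metric.mem_ball] using hy2, not_lt.1 hy1⟩
    choose y hy1 hy2 using hseq
    have hytends : Tendsto y atTop (𝓝 x) := by
      rw [Metric.tendsto_atTop]
      intro ε hε
      obtain ⟨N, hN⟩ := exists_nat_one_div_lt hε
      refine ⟨N, fun n hn => lt_of_lt_of_le (lt_of_lt_of_le (hy1 n) ?_) hN.le⟩
      have : (N:ℝ) + 1 ≤ (n:ℝ) + 1 := by exact_mod_cast Nat.succ_le_succ hn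
      gcongr
    have hbound : ∀ n, h (y n) ∈ Icc (0:ℝ) c := fun n => ⟨hnonneg _, hy2 n⟩
    obtain ⟨a, ha, φ, hφ, hconv2⟩ := tendsto_subseq_of_bounded (Metric.isBounded_Icc 0 c) hbound
    have hmem2 : ∀ n, ((y (φ n), h (y (φ n))) : E × ℝ) ∈ S := fun n => hmem _
    have hxa : ((x, a) : E × ℝ) ∈ S := by
      have htend : Tendsto (fun n => ((y (φ n), h (y (φ n))) : E × ℝ)) atTop
          (𝓝 (x, a)) :=
        ((hytends.comp hφ.tendsto_atTop).prodMk_nhds hconv2)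
      exact hSclosed.mem_of_tendsto htend (Filter.Eventually.of_forall hmem2)
    have h3 : h x ≤ a := csInf_le (hAbdd x) hxa
    have h4 : a ≤ c := by
      rw [isClosed_Icc.closure_eq] at ha
      exact ha.2
    exact absurd hc (not_lt.2 (h3.trans h4))

end Hull

section Decomp

variable {E : Type*} [NormedAddCommGroup E] [NormedSpace ℝ E]

lemma decomp {G : E → ℝ} {α : ℝ} (hα : 0 < α) (hcoer : ∀ x, α * ‖x‖ ≤ G x)
    (hsub : ∀ r : ℝ, Convex ℝ {x : E | G x ≤ r})
    {p c lam : ℝ} (hp : 1 ≤ p) (hc : 0 < c) (hclam : c < lam)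
    (hhalf : (c / lam) ^ p ≤ 1 / 2)
    {x : E} {μ : ℝ} (hmem : (x, μ) ∈ convexHull ℝ {q : E × ℝ | G q.1 ^ p ≤ q.2})
    (hμ : μ ≤ c ^ p) :
    ∃ ξ' : E, G ξ' ≤ lam ∧
      ‖ξ' - x‖ ≤ (lam * (c / lam) ^ p +
        (2 * lam * (c / lam) ^ p + c ^ p / (2 * lam) ^ (p - 1))) / α := by
  classical
  have hlam0 : 0 < lam := hc.trans hclam
  have hG0 : ∀ y : E, 0 ≤ G y := fun y => le_trans (by positivity) (hcoer y)
  have hp0 : (0 : ℝ) < p := lt_of_lt_of_le one_pos hp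
  set ε : ℝ := (c / lam) ^ p with hεdef
  set B : ℝ := 2 * lam * ε + c ^ p / (2 * lam) ^ (p - 1) with hBdef
  rw [convexHull_eq] at hmem
  obtain ⟨ι, s, w, z, hw0, hw1, hz, hcm⟩ := hmem
  rw [Finset.centerMass_eq_of_sum_1 _ _ hw1] at hcm
  have hx : ∑ i ∈ s, w i • (z i).1 = x := by
    have h1 := congrArg Prod.fst hcm
    rw [Prod.fst_sum] at h1
    simpa only [Prod.smul_fst] using h1
  have hμs : ∑ i ∈ s, w i * (z i).2 = μ := by
    have h1 := congrArg Prod.snd hcm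
    rw [Prod.snd_sum] at h1
    simpa only [Prod.smul_snd, smul_eq_mul] using h1
  set a : ι → ℝ := fun i => G (z i).1 with hadef
  have ha0 : ∀ i, 0 ≤ a i := fun i => hG0 _
  have hsum : ∑ i ∈ s, w i * a i ^ p ≤ c ^ p := by
    calc ∑ i ∈ s, w i * a i ^ p ≤ ∑ i ∈ s, w i * (z i).2 :=
          Finset.sum_le_sum fun i hi =>
            mul_le_mul_of_nonneg_left (hz i hi) (hw0 i hi)
      _ = μ := hμs
      _ ≤ c ^ p := hμ
  set I : Finset ι := s.filter (fun i => a i ≤ lam) with hIdef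
  set J : Finset ι := s.filter (fun i => ¬ a i ≤ lam) with hJdef
  have hJs : J ⊆ s := Finset.filter_subset _ s
  have hIs : I ⊆ s := Finset.filter_subset _ s
  have hwa_nonneg : ∀ i ∈ s, 0 ≤ w i * a i ^ p := fun i hi =>
    mul_nonneg (hw0 i hi) (Real.rpow_nonneg (ha0 i) p)
  have hJsum : ∑ i ∈ J, w i * a i ^ p ≤ c ^ p :=
    le_trans (Finset.sum_le_sum_of_subset_of_nonneg hJs
      (fun i hi _ => hwa_nonneg i hi)) hsum
  have hlamp0 : 0 < lam ^ p := Real.rpow_pos_of_pos hlam0 p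
  have hJw : ∑ i ∈ J, w i ≤ ε := by
    have h5 : ∀ i ∈ J, w i * lam ^ p ≤ w i * a i ^ p := by
      intro i hi
      have hi2 := Finset.mem_filter.1 hi
      exact mul_le_mul_of_nonneg_left
        (Real.rpow_le_rpow hlam0.le (not_le.1 hi2.2).le hp0.le)
        (hw0 i hi2.1)
    have h6 : (∑ i ∈ J, w i) * lam ^ p ≤ c ^ p := by
      rw [Finset.sum_mul]
      exact le_trans (Finset.sum_le_sum h5) hJsum
    rw [hεdef, Real.div_rpow hc.le hlam0.le]
    exact (le_div_iff₀ hlamp0).2 h6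
  have hJwnn : 0 ≤ ∑ i ∈ J, w i :=
    Finset.sum_nonneg fun i hi => hw0 i (hJs hi)
  have h2lam0 : (0:ℝ) < 2 * lam := by linarith
  have h2lamp0 : (0:ℝ) < (2 * lam) ^ (p - 1) := Real.rpow_pos_of_pos h2lam0 _
  have hJwa : ∑ i ∈ J, w i * a i ≤ B := by
    have hb1 : ∑ i ∈ J.filter (fun i => a i ≤ 2 * lam), w i * a i
        ≤ 2 * lam * ε := by
      calc ∑ i ∈ J.filter (fun i => a i ≤ 2 * lam), w i * a i
          ≤ ∑ i ∈ J.filter (fun i => a i ≤ 2 * lam), w i * (2 * lam) :=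
            Finset.sum_le_sum fun i hi =>
              mul_le_mul_of_nonneg_left (Finset.mem_filter.1 hi).2
                (hw0 i (hJs (Finset.mem_filter.1 hi).1))
        _ = (∑ i ∈ J.filter (fun i => a i ≤ 2 * lam), w i) * (2 * lam) := by
            rw [Finset.sum_mul]
        _ ≤ (∑ i ∈ J, w i) * (2 * lam) := by
            apply mul_le_mul_of_nonneg_right _ h2lam0.le
            exact Finset.sum_le_sum_of_subset_of_nonneg
              (Finset.filter_subset _ _) (fun i hi _ => hw0 i (hJs hi))
        _ ≤ ε * (2 * lam) := mul_le_mul_of_nonneg_right hJw h2lam0.le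
        _ = 2 * lam * ε := by ring
    have hb2 : ∑ i ∈ J.filter (fun i => ¬ a i ≤ 2 * lam), w i * a i
        ≤ c ^ p / (2 * lam) ^ (p - 1) := by
      have h8 : ∀ i ∈ J.filter (fun i => ¬ a i ≤ 2 * lam),
          w i * a i ≤ (w i * a i ^ p) / (2 * lam) ^ (p - 1) := by
        intro i hi
        have hi2 := Finset.mem_filter.1 hi
        have hai : 2 * lam < a i := not_le.1 hi2.2
        have hai0 : 0 < a i := h2lam0.trans hai
        have h9 : (2 * lam) ^ (p - 1) ≤ a i ^ (p - 1) :=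
          Real.rpow_le_rpow h2lam0.le hai.le (by linarith)
        have hpow : a i ^ p = a i ^ (p - 1) * a i := by
          rw [show p = (p - 1) + 1 by ring, Real.rpow_add hai0, Real.rpow_one,
            sub_add_cancel]
        have h10 : a i * (2 * lam) ^ (p - 1) ≤ a i ^ p := by
          rw [hpow, mul_comm (a i ^ (p - 1)) (a i)]
          exact mul_le_mul_of_nonneg_left h9 hai0.le
        have h11 : a i ≤ a i ^ p / (2 * lam) ^ (p - 1) :=
          (le_div_iff₀ h2lamp0).2 h10
        calc w i * a i ≤ w i * (a i ^ p / (2 * lam) ^ (p - 1)) :=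
              mul_le_mul_of_nonneg_left h11 (hw0 i (hJs hi2.1))
          _ = (w i * a i ^ p) / (2 * lam) ^ (p - 1) := by ring
      calc ∑ i ∈ J.filter (fun i => ¬ a i ≤ 2 * lam), w i * a i
          ≤ ∑ i ∈ J.filter (fun i => ¬ a i ≤ 2 * lam),
              (w i * a i ^ p) / (2 * lam) ^ (p - 1) := Finset.sum_le_sum h8
        _ = (∑ i ∈ J.filter (fun i => ¬ a i ≤ 2 * lam), w i * a i ^ p)
              / (2 * lam) ^ (p - 1) := by rw [Finset.sum_div]
        _ ≤ c ^ p / (2 * lam) ^ (p - 1) := by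
            have hnum : ∑ i ∈ J.filter (fun i => ¬ a i ≤ 2 * lam),
                w i * a i ^ p ≤ c ^ p :=
              le_trans (Finset.sum_le_sum_of_subset_of_nonneg
                (Finset.filter_subset _ _)
                (fun i hi _ => hwa_nonneg i (hJs hi))) hJsum
            gcongr
    calc ∑ i ∈ J, w i * a i
        = ∑ i ∈ J.filter (fun i => a i ≤ 2 * lam), w i * a i
          + ∑ i ∈ J.filter (fun i => ¬ a i ≤ 2 * lam), w i * a i :=
          (Finset.sum_filter_add_sum_filter_not J _ _).symm
      _ ≤ 2 * lam * ε + c ^ p / (2 * lam) ^ (p - 1) := add_le_add hb1 hb2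
      _ = B := by rw [hBdef]
  have hIJ : ∑ i ∈ I, w i + ∑ i ∈ J, w i = 1 := by
    rw [hIdef, hJdef, Finset.sum_filter_add_sum_filter_not]
    exact hw1
  set t : ℝ := ∑ i ∈ I, w i with htdef
  have hJhalf : ∑ i ∈ J, w i ≤ 1 / 2 := hJw.trans hhalf
  have ht0 : 0 < t := by
    have h12 : t = 1 - ∑ i ∈ J, w i := by linarith
    rw [h12]
    linarith
  have ht1 : t ≤ 1 := by linarith
  set ξ' : E := I.centerMass w (fun i => (z i).1) with hξ'def
  have hGξ' : G ξ' ≤ lam := by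
    have hmem2 : ξ' ∈ convexHull ℝ {y : E | G y ≤ lam} :=
      Finset.centerMass_mem_convexHull I
        (fun i hi => hw0 i (hIs hi)) (htdef ▸ ht0)
        (fun i hi => (Finset.mem_filter.1 hi).2)
    rwa [(hsub lam).convexHull_eq] at hmem2
  have hnξ' : ‖ξ'‖ ≤ lam / α :=
    (le_div_iff₀ hα).2 (by rw [mul_comm]; exact (hcoer ξ').trans hGξ')
  have hIsum : ∑ i ∈ I, w i • (z i).1 = t • ξ' := by
    rw [hξ'def, Finset.centerMass, ← htdef, smul_inv_smul₀ ht0.ne']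
  have hxdec : x = t • ξ' + ∑ i ∈ J, w i • (z i).1 := by
    rw [← hIsum, ← hx, hIdef, hJdef]
    exact (Finset.sum_filter_add_sum_filter_not s _ _).symm
  have hzJ : ‖∑ i ∈ J, w i • (z i).1‖ ≤ B / α := by
    calc ‖∑ i ∈ J, w i • (z i).1‖ ≤ ∑ i ∈ J, ‖w i • (z i).1‖ := norm_sum_le _ _
      _ = ∑ i ∈ J, w i * ‖(z i).1‖ := by
          refine Finset.sum_congr rfl fun i hi => ?_
          rw [norm_smul, Real.norm_eq_abs, abs_of_nonneg (hw0 i (hJs hi))]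
      _ ≤ ∑ i ∈ J, w i * (a i / α) := Finset.sum_le_sum fun i hi =>
          mul_le_mul_of_nonneg_left
            ((le_div_iff₀ hα).2 (by rw [mul_comm]; exact hcoer _))
            (hw0 i (hJs hi))
      _ = (∑ i ∈ J, w i * a i) / α := by
          rw [Finset.sum_div]
          exact Finset.sum_congr rfl fun i hi => by ring
      _ ≤ B / α := by gcongr
  refine ⟨ξ', hGξ', ?_⟩
  have h1t0 : 0 ≤ 1 - t := by linarith
  have hdiff : ξ' - x = (1 - t) • ξ' - ∑ i ∈ J, w i • (z i).1 := by
    rw [hxdec, sub_smul, one_smul]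
    abel
  rw [hdiff]
  calc ‖(1 - t) • ξ' - ∑ i ∈ J, w i • (z i).1‖
      ≤ ‖(1 - t) • ξ'‖ + ‖∑ i ∈ J, w i • (z i).1‖ := norm_sub_le _ _
    _ = (1 - t) * ‖ξ'‖ + ‖∑ i ∈ J, w i • (z i).1‖ := by
        rw [norm_smul, Real.norm_eq_abs, abs_of_nonneg h1t0]
    _ ≤ ε * (lam / α) + B / α := by
        refine add_le_add (mul_le_mul ?_ hnξ' (norm_nonneg _) ?_) hzJ
        · linarith
        · rw [hεdef]; positivity
    _ = (lam * ε + B) / α := by field_simp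

end Decomp

section Key

variable {E : Type*} [NormedAddCommGroup E] [NormedSpace ℝ E]

lemma key {G : E → ℝ} {α : ℝ} (hα : 0 < α) (hcoer : ∀ x, α * ‖x‖ ≤ G x)
    (hlsc : LowerSemicontinuous G)
    (hsub : ∀ r : ℝ, Convex ℝ {x : E | G x ≤ r})
    (ξ : E) {c : ℝ} (hc : 0 < c) (hcG : c < G ξ) :
    ∃ p : ℝ, 1 ≤ p ∧ c ^ p ≤ envR (fun η => G η ^ p) ξ := by
  have hG0 : ∀ y : E, 0 ≤ G y := fun y => le_trans (by positivity) (hcoer y)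
  set lam : ℝ := (c + G ξ) / 2 with hlamdef
  have hclam : c < lam := by rw [hlamdef]; linarith
  have hlamG : lam < G ξ := by rw [hlamdef]; linarith
  have hlam0 : 0 < lam := hc.trans hclam
  obtain ⟨r, hr0, hr⟩ := Metric.eventually_nhds_iff.1 (hlsc ξ lam hlamG)
  have hq1 : (0:ℝ) < c / lam := by positivity
  have hq2 : (0:ℝ) < c / (2 * lam) := by positivity
  have hb1 : c / lam < 1 := (div_lt_one hlam0).2 hclam
  have hb2 : c / (2 * lam) < 1 := (div_lt_one (by linarith)).2 (by linarith)
  have t1 : Tendsto (fun p : ℝ => (c / lam) ^ p) atTop (𝓝 0) :=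
    tendsto_rpow_atTop_of_base_lt_one _ (by linarith) hb1
  have t2 : Tendsto (fun p : ℝ => (c / (2 * lam)) ^ p) atTop (𝓝 0) :=
    tendsto_rpow_atTop_of_base_lt_one _ (by linarith) hb2
  have hT : Tendsto (fun p : ℝ => lam * (c / lam) ^ p +
      (2 * lam * (c / lam) ^ p + 2 * lam * (c / (2 * lam)) ^ p)) atTop (𝓝 0) := by
    have := (t1.const_mul lam).add ((t1.const_mul (2 * lam)).add
      (t2.const_mul (2 * lam)))
    simpa using this
  obtain ⟨p, hev1p, hev2p, hp1⟩ :=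
    ((hT.eventually_lt_const (show (0:ℝ) < α * (r / 2) by positivity)).and
      ((t1.eventually_lt_const one_half_pos).and (eventually_ge_atTop (1:ℝ)))).exists
  have hhalf : (c / lam) ^ p ≤ 1 / 2 := hev2p.le
  have hgp0 : ∀ η : E, 0 ≤ G η ^ p := fun η => Real.rpow_nonneg (hG0 η) p
  obtain ⟨h, hh0, hhle, hhconv, hhlsc, hhmem⟩ := Ep_exists (fun η => G η ^ p) hgp0
  refine ⟨p, hp1, ?_⟩
  have henv : h ξ ≤ envR (fun η => G η ^ p) ξ := le_envR hgp0 hhconv hhlsc hhle ξ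
  refine le_trans ?_ henv
  by_contra hcon
  push_neg at hcon
  obtain ⟨q, hqmem, hqdist⟩ := Metric.mem_closure_iff.1 (hhmem ξ)
    (min (r / 2) (c ^ p - h ξ)) (lt_min (by positivity) (by linarith))
  have hd1 : dist ξ q.1 < r / 2 := by
    have h0 : dist ξ q.1 ≤ dist ((ξ, h ξ) : E × ℝ) q := by
      rw [Prod.dist_eq]; exact le_max_left _ _
    exact lt_of_le_of_lt h0 (hqdist.trans_le (min_le_left _ _))
  have hd2 : dist (h ξ) q.2 < c ^ p - h ξ := by
    refine lt_of_le_of_lt ?_ (hqdist.trans_le (min_le_right _ _))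
    rw [Prod.dist_eq]
    exact le_max_right _ _
  have hq2' : q.2 ≤ c ^ p := by
    rw [Real.dist_eq] at hd2
    have := abs_sub_lt_iff.1 hd2
    linarith [this.2]
  have hmemq : (q.1, q.2) ∈ convexHull ℝ {q : E × ℝ | G q.1 ^ p ≤ q.2} := by
    simpa using hqmem
  obtain ⟨ξ', hGξ', hdist⟩ := decomp hα hcoer hsub hp1 hc hclam hhalf hmemq hq2'
  have hid : c ^ p / (2 * lam) ^ (p - 1) = 2 * lam * (c / (2 * lam)) ^ p := by
    rw [Real.div_rpow hc.le (by linarith : (0:ℝ) ≤ 2 * lam),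
      Real.rpow_sub (by linarith : (0:ℝ) < 2 * lam), Real.rpow_one]
    have hne : (2 * lam) ^ p ≠ 0 := ne_of_gt (Real.rpow_pos_of_pos (by linarith) p)
    field_simp
  have h16 : (lam * (c / lam) ^ p +
      (2 * lam * (c / lam) ^ p + c ^ p / (2 * lam) ^ (p - 1))) / α < r / 2 := by
    rw [div_lt_iff₀ hα, hid]
    calc lam * (c / lam) ^ p +
        (2 * lam * (c / lam) ^ p + 2 * lam * (c / (2 * lam)) ^ p)
        < α * (r / 2) := hev1p
      _ = r / 2 * α := by ring
  have h15 : ‖ξ' - q.1‖ < r / 2 := lt_of_le_of_lt hdist h16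
  have h14 : ‖q.1 - ξ‖ < r / 2 := by rw [← dist_eq_norm, dist_comm]; exact hd1
  have hlt : dist ξ' ξ < r := by
    rw [dist_eq_norm]
    calc ‖ξ' - ξ‖ = ‖(ξ' - q.1) + (q.1 - ξ)‖ := by abel_nf
      _ ≤ ‖ξ' - q.1‖ + ‖q.1 - ξ‖ := norm_add_le _ _
      _ < r := by linarith
  exact absurd (hr hlt) (not_lt.2 hGξ')

end Key

section Sup

variable {E : Type*} [NormedAddCommGroup E] [NormedSpace ℝ E]

lemma toReal_le_of_le_coe {v : EReal} {r : ℝ} (h : v ≤ (r : EReal)) (hr : 0 ≤ r) :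
    v.toReal ≤ r := by
  by_cases hb : v = ⊥
  · simpa [hb] using hr
  · have := EReal.toReal_le_toReal h hb (EReal.coe_ne_top r)
    simpa using this

lemma lslc_le_sup (f : E → ℝ) {α : ℝ} (hα : 0 < α) (hcoer : ∀ x, α * ‖x‖ ≤ f x)
    (ξ : E) :
    lslcEnv (fun η => ((f η : ℝ) : EReal)) ξ ≤
      ⨆ p : {p : ℝ // 1 ≤ p},
        ((envR (fun η => f η ^ (p : ℝ)) ξ ^ (1 / (p : ℝ)) : ℝ) : EReal) := by
  have hf0 : ∀ x : E, 0 ≤ f x := fun x => le_trans (by positivity) (hcoer x)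
  set S : EReal := ⨆ p : {p : ℝ // 1 ≤ p},
    ((envR (fun η => f η ^ (p : ℝ)) ξ ^ (1 / (p : ℝ)) : ℝ) : EReal) with hSdef
  have hS0 : (0 : EReal) ≤ S := by
    refine le_trans ?_ (le_iSup (fun p : {p : ℝ // 1 ≤ p} =>
      ((envR (fun η => f η ^ (p : ℝ)) ξ ^ (1 / (p : ℝ)) : ℝ) : EReal)) ⟨1, le_refl 1⟩)
    exact EReal.coe_nonneg.2 (Real.rpow_nonneg (envR_nonneg (fp_nonneg hf0 1) ξ) _)
  refine iSup_le ?_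
  rintro ⟨G₀, hG₀lsc, hG₀lc, hG₀le⟩
  simp only
  set G : E → ℝ := fun η => max ((G₀ η).toReal) (α * ‖η‖) with hGdef
  have hG₀ne_top : ∀ η, G₀ η ≠ ⊤ := by
    intro η h
    have := hG₀le η
    rw [h] at this
    exact (EReal.coe_lt_top (f η)).not_ge this
  have htoReal_le : ∀ η, (G₀ η).toReal ≤ f η :=
    fun η => toReal_le_of_le_coe (hG₀le η) (hf0 η)
  have hGle : ∀ η, G η ≤ f η := fun η => max_le (htoReal_le η) (hcoer η)
  have hGcoer : ∀ η, α * ‖η‖ ≤ G η := fun η => le_max_right _ _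
  have hG0 : ∀ η, 0 ≤ G η := fun η => le_trans (by positivity) (hGcoer η)
  have hG₀G : ∀ η, G₀ η ≤ ((G η : ℝ) : EReal) := by
    intro η
    by_cases hb : G₀ η = ⊥
    · rw [hb]; exact bot_le
    · rw [← EReal.coe_toReal (hG₀ne_top η) hb]
      exact EReal.coe_le_coe_iff.2 (le_max_left _ _)
  have hGlsc : LowerSemicontinuous G := by
    intro x c hc
    rcases lt_or_ge c (α * ‖x‖) with h | h
    · have hcont : Continuous fun y : E => α * ‖y‖ := continuous_const.mul continuous_norm
      filter_upwards [hcont.lowerSemicontinuous x c h] with y hy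
      exact hy.trans_le (le_max_right _ _)
    · have hcx : c < (G₀ x).toReal := by
        by_contra hcon2
        exact absurd hc (not_lt.2 (max_le (not_lt.1 hcon2) h))
      have hb : G₀ x ≠ ⊥ := by
        intro hbb
        rw [hbb] at hcx
        simp only [EReal.toReal_bot] at hcx
        have : (0:ℝ) ≤ α * ‖x‖ := by positivity
        linarith
      have hcoe : ((c : ℝ) : EReal) < G₀ x := by
        rw [← EReal.coe_toReal (hG₀ne_top x) hb]
        exact_mod_cast hcx
      filter_upwards [hG₀lsc x _ hcoe] with y hy
      have h2 := hy.trans_le (hG₀G y)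
      exact_mod_cast h2
  have hGlevel : ∀ x y : E, ∀ t : ℝ, 0 < t → t < 1 →
      G (t • x + (1 - t) • y) ≤ max (G x) (G y) := by
    intro x y t ht ht1
    have hmax0 : 0 ≤ max (G x) (G y) := le_trans (hG0 x) (le_max_left _ _)
    apply max_le
    · have h1 : G₀ (t • x + (1 - t) • y) ≤ max (G₀ x) (G₀ y) := hG₀lc x y t ht ht1
      have h2 : max (G₀ x) (G₀ y) ≤ ((max (G x) (G y) : ℝ) : EReal) := by
        apply max_le
        · exact (hG₀G x).trans (EReal.coe_le_coe_iff.2 (le_max_left _ _))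
        · exact (hG₀G y).trans (EReal.coe_le_coe_iff.2 (le_max_right _ _))
      exact toReal_le_of_le_coe (h1.trans h2) hmax0
    · have h4 : ‖t • x + (1 - t) • y‖ ≤ t * ‖x‖ + (1 - t) * ‖y‖ := by
        calc ‖t • x + (1 - t) • y‖ ≤ ‖t • x‖ + ‖(1 - t) • y‖ := norm_add_le _ _
          _ = t * ‖x‖ + (1 - t) * ‖y‖ := by
              rw [norm_smul, norm_smul, Real.norm_eq_abs, Real.norm_eq_abs,
                abs_of_pos ht, abs_of_pos (by linarith : (0:ℝ) < 1 - t)]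
      calc α * ‖t • x + (1 - t) • y‖ ≤ t * (α * ‖x‖) + (1 - t) * (α * ‖y‖) := by
            nlinarith
        _ ≤ t * G x + (1 - t) * G y := by
            have := hGcoer x
            have := hGcoer y
            nlinarith
        _ ≤ max (G x) (G y) := combo_le_max _ _ _ ht.le ht1.le
  have hGsub : ∀ r : ℝ, Convex ℝ {x : E | G x ≤ r} := convex_sublevel hGlevel
  refine le_trans (hG₀G ξ) ?_
  by_contra hcon
  push_neg at hcon
  obtain ⟨cc, hc1, hc2⟩ := EReal.exists_between_coe_real hcon
  have hcc_pos : 0 < cc := by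
    have : (0 : EReal) < (cc : EReal) := lt_of_le_of_lt hS0 hc1
    exact_mod_cast this
  have hccG : cc < G ξ := by exact_mod_cast hc2
  obtain ⟨p, hp1, hkey⟩ := key hα hGcoer hGlsc hGsub ξ hcc_pos hccG
  have hp0 : (0:ℝ) < p := lt_of_lt_of_le one_pos hp1
  have hgp0 : ∀ η : E, 0 ≤ G η ^ p := fun η => Real.rpow_nonneg (hG0 η) p
  have hfp0 : ∀ η : E, 0 ≤ f η ^ p := fp_nonneg hf0 p
  have hmono : envR (fun η => G η ^ p) ξ ≤ envR (fun η => f η ^ p) ξ :=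
    envR_mono hgp0 hfp0 (fun η => Real.rpow_le_rpow (hG0 η) (hGle η) hp0.le) ξ
  have hterm : cc ≤ envR (fun η => f η ^ p) ξ ^ (1 / p) := by
    have h5 : cc ^ p ≤ envR (fun η => f η ^ p) ξ := hkey.trans hmono
    have h6 := Real.rpow_le_rpow (Real.rpow_nonneg hcc_pos.le p) h5
      (by positivity : (0:ℝ) ≤ 1 / p)
    rwa [← Real.rpow_mul hcc_pos.le, mul_one_div, div_self hp0.ne',
      Real.rpow_one] at h6
  have hfinal : ((cc : ℝ) : EReal) ≤ S := by
    refine le_trans ?_ (le_iSup (fun p : {p : ℝ // 1 ≤ p} =>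
      ((envR (fun η => f η ^ (p : ℝ)) ξ ^ (1 / (p : ℝ)) : ℝ) : EReal)) ⟨p, hp1⟩)
    exact EReal.coe_le_coe_iff.2 hterm
  exact absurd hfinal (not_le.2 hc1)

end Sup

theorem stmt12 (d N : ℕ) (f : EuclideanSpace ℝ (Fin d × Fin N) → ℝ)
    (hf : Measurable f) (α : ℝ) (hα : 0 < α) (hcoer : ∀ ξ, α * ‖ξ‖ ≤ f ξ)
    (ξ : EuclideanSpace ℝ (Fin d × Fin N)) :
    MonotoneOn
      (fun p : ℝ =>
        (((convLscEnv (fun η => ((f η ^ p : ℝ) : EReal)) ξ).toReal ^ (1 / p) : ℝ) : EReal))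
      (Set.Ici 1) ∧
    Tendsto
      (fun p : ℝ =>
        (((convLscEnv (fun η => ((f η ^ p : ℝ) : EReal)) ξ).toReal ^ (1 / p) : ℝ) : EReal))
      atTop (𝓝 (lslcEnv (fun η => ((f η : ℝ) : EReal)) ξ)) ∧
    (⨆ p : {p : ℝ // 1 ≤ p},
        (((convLscEnv (fun η => ((f η ^ (p : ℝ) : ℝ) : EReal)) ξ).toReal
            ^ (1 / (p : ℝ)) : ℝ) : EReal)) =
      lslcEnv (fun η => ((f η : ℝ) : EReal)) ξ := by
  have hf0 : ∀ η, 0 ≤ f η := fun η => le_trans (by positivity) (hcoer η)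
  have hmono : MonotoneOn
      (fun p : ℝ =>
        (((convLscEnv (fun η => ((f η ^ p : ℝ) : EReal)) ξ).toReal ^ (1 / p) : ℝ) : EReal))
      (Set.Ici 1) := by
    intro p hp q hq hpq
    simp only
    exact EReal.coe_le_coe_iff.2 (mono_term hf0 hp hpq ξ)
  have hsup : (⨆ p : {p : ℝ // 1 ≤ p},
        (((convLscEnv (fun η => ((f η ^ (p : ℝ) : ℝ) : EReal)) ξ).toReal
            ^ (1 / (p : ℝ)) : ℝ) : EReal)) =
      lslcEnv (fun η => ((f η : ℝ) : EReal)) ξ := by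
    refine le_antisymm ?_ ?_
    · refine iSup_le ?_
      rintro ⟨p, hp⟩
      exact term_le_lslc hf0 hp ξ
    · exact lslc_le_sup f hα hcoer ξ
  refine ⟨hmono, ?_, hsup⟩
  rw [← hsup]
  rw [tendsto_order]
  constructor
  · intro a ha
    obtain ⟨⟨p₀, hp₀⟩, hp₀a⟩ := lt_iSup_iff.1 ha
    filter_upwards [eventually_ge_atTop p₀] with p hp
    have hp1 : (1 : ℝ) ≤ p := hp₀.trans hp
    exact lt_of_lt_of_le hp₀a (hmono (Set.mem_Ici.2 hp₀) (Set.mem_Ici.2 hp1) hp)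
  · intro b hb
    filter_upwards [eventually_ge_atTop (1:ℝ)] with p hp
    refine lt_of_le_of_lt ?_ hb
    exact le_iSup (fun q : {q : ℝ // 1 ≤ q} =>
      (((convLscEnv (fun η => ((f η ^ (q : ℝ) : ℝ) : EReal)) ξ).toReal
          ^ (1 / (q : ℝ)) : ℝ) : EReal)) ⟨p, hp⟩
end

section
/- Let I be a nonempty index set and, for each η ∈ I, let f_η : ℝ^{d×N} → ℝ be a strong Morrey quasiconvex function. Suppose the pointwise supremum f̂ := sup_{η∈I} f_η is real-valued and Borel measurable. Then f̂ is strong Morrey quasiconvex. -/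
open Filter Topology

variable {X : Type*}

open MeasureTheory

/-- The space `ℝ^{d×N}` of `d×N` real matrices, identified with (continuous) linear maps
from `ℝ^N` to `ℝ^d`. -/
abbrev Mat (d N : ℕ) := EuclideanSpace ℝ (Fin N) →L[ℝ] EuclideanSpace ℝ (Fin d)

noncomputable instance (d N : ℕ) : MeasurableSpace (Mat d N) := borel _
instance (d N : ℕ) : BorelSpace (Mat d N) := ⟨rfl⟩

/-- The open unit cube `Q = (0,1)^N` in `ℝ^N`. -/
def unitCube (N : ℕ) : Set (EuclideanSpace ℝ (Fin N)) :=
  {x | ∀ i, x i ∈ Set.Ioo (0 : ℝ) 1}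

/-- `h` is strong Morrey quasiconvex: for all `ε > 0`, `ξ` and `K > 0` there is `δ > 0`
such that any Lipschitz `φ` with `‖Dφ‖ ≤ K` a.e. on the unit cube `Q` and `‖φ‖ ≤ δ` on
`∂Q` satisfies `h(ξ) ≤ ess sup_{x ∈ Q} h(ξ + Dφ(x)) + ε`. -/
def StrongMorreyQuasiconvex {d N : ℕ} (h : Mat d N → EReal) : Prop :=
  ∀ ε : ℝ, 0 < ε → ∀ ξ : Mat d N, ∀ K : ℝ, 0 < K →
    ∃ δ : ℝ, 0 < δ ∧
      ∀ φ : EuclideanSpace ℝ (Fin N) → EuclideanSpace ℝ (Fin d),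
        (∃ L : NNReal, LipschitzWith L φ) →
        (∀ᵐ x ∂(volume.restrict (unitCube N)), ‖fderiv ℝ φ x‖ ≤ K) →
        (∀ x ∈ frontier (unitCube N), ‖φ x‖ ≤ δ) →
        h ξ ≤ essSup (fun x => h (ξ + fderiv ℝ φ x)) (volume.restrict (unitCube N)) +
          ((ε : ℝ) : EReal)

theorem StrongMorreyQuasiconvex.of_forall_exists_minorant {d N : ℕ} {h : Mat d N → EReal}
    (happrox : ∀ ξ, ∀ ε : ℝ, 0 < ε →
      ∃ g, StrongMorreyQuasiconvex g ∧ g ≤ h ∧ h ξ ≤ g ξ + ((ε : ℝ) : EReal)) :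
    StrongMorreyQuasiconvex h := by
  intro ε hε ξ K hK
  obtain ⟨g, hg, hgh, hξ⟩ := happrox ξ (ε / 2) (half_pos hε)
  obtain ⟨δ, hδ, hgδ⟩ := hg (ε / 2) (half_pos hε) ξ K hK
  refine ⟨δ, hδ, fun φ hlip hder hbd => ?_⟩
  calc h ξ ≤ g ξ + ((ε / 2 : ℝ) : EReal) := hξ
    _ ≤ essSup (fun x => g (ξ + fderiv ℝ φ x)) (volume.restrict (unitCube N))
          + ((ε / 2 : ℝ) : EReal) + ((ε / 2 : ℝ) : EReal) :=
        add_le_add_left (hgδ φ hlip hder hbd) _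
    _ ≤ essSup (fun x => h (ξ + fderiv ℝ φ x)) (volume.restrict (unitCube N))
          + ((ε / 2 : ℝ) : EReal) + ((ε / 2 : ℝ) : EReal) := by
        gcongr
        exact essSup_mono_ae (Eventually.of_forall fun x => hgh _)
    _ = essSup (fun x => h (ξ + fderiv ℝ φ x)) (volume.restrict (unitCube N))
          + ((ε : ℝ) : EReal) := by
        rw [add_assoc, ← EReal.coe_add, add_halves]

theorem stmt14_general {d N : ℕ} {I : Type*} [Nonempty I] (f : I → Mat d N → ℝ)
    (hsmq : ∀ η, StrongMorreyQuasiconvex (fun ξ => ((f η ξ : ℝ) : EReal)))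
    (hbdd : ∀ ξ, BddAbove (Set.range fun η => f η ξ)) :
    StrongMorreyQuasiconvex (fun ξ => (((⨆ η, f η ξ : ℝ)) : EReal)) := by
  refine StrongMorreyQuasiconvex.of_forall_exists_minorant fun ξ ε hε => ?_
  obtain ⟨η, hη⟩ := exists_lt_of_lt_ciSup (sub_lt_self (⨆ η, f η ξ) hε)
  refine ⟨_, hsmq η, fun ζ => EReal.coe_le_coe_iff.2 (le_ciSup (hbdd ζ) η), ?_⟩
  rw [← EReal.coe_add, EReal.coe_le_coe_iff]
  linarith

/-- a pointwise supremum of strong Morrey quasiconvex functions which is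
real-valued (i.e. pointwise bounded above) and Borel measurable is strong Morrey
quasiconvex. -/
theorem stmt14 {d N : ℕ} {I : Type*} [Nonempty I] (f : I → Mat d N → ℝ)
    (hmeas : ∀ η, Measurable (f η))
    (hsmq : ∀ η, StrongMorreyQuasiconvex (fun ξ => ((f η ξ : ℝ) : EReal)))
    (hbdd : ∀ ξ, BddAbove (Set.range fun η => f η ξ))
    (hmeas_sup : Measurable fun ξ => ⨆ η, f η ξ) :
    StrongMorreyQuasiconvex (fun ξ => (((⨆ η, f η ξ : ℝ)) : EReal)) :=
  stmt14_general f hsmq hbdd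
end

section
/- Let f : ℝ^{d×N} → [0,+∞) be a Borel function and let p ≥ 1. Then ((f^p)^{**}(ξ))^{1/p} ≤ f^{lslc}(ξ) for every ξ ∈ ℝ^{d×N}, where (f^p)^{**} denotes the greatest lower semicontinuous convex function below f^p. -/
open Filter Topology

variable {X : Type*}

/-- for Borel `f : ℝ^{d×N} → [0,+∞)` and `p ≥ 1`,
`((f^p)^{**}(ξ))^{1/p} ≤ f^{lslc}(ξ)` for every `ξ`. -/
theorem stmt18 (d N : ℕ) (f : EuclideanSpace ℝ (Fin d × Fin N) → ℝ)
    (hf : Measurable f) (hf0 : ∀ ξ, 0 ≤ f ξ) (p : ℝ) (hp : 1 ≤ p)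
    (ξ : EuclideanSpace ℝ (Fin d × Fin N)) :
    (((convLscEnv (fun η => ((f η ^ p : ℝ) : EReal)) ξ).toReal ^ (1 / p) : ℝ) : EReal) ≤
      lslcEnv (fun η => ((f η : ℝ) : EReal)) ξ := by
  classical
  have hp0 : (0:ℝ) < p := lt_of_lt_of_le one_pos hp
  have hip0 : (0:ℝ) < 1 / p := by positivity
  set g : EuclideanSpace ℝ (Fin d × Fin N) → EReal := fun η => ((f η ^ p : ℝ) : EReal) with hgdef
  set h : EuclideanSpace ℝ (Fin d × Fin N) → EReal := convLscEnv g with hhdef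
  have hcm : ∀ r s : ℝ, ((max r s : ℝ) : EReal) = max (r : EReal) (s : EReal) :=
    fun r s => Monotone.map_max (fun _ _ hrs => EReal.coe_le_coe_iff.mpr hrs)
  -- the zero function is a convex lsc minorant of g
  have hzero : ERealConvexFn (fun _ : EuclideanSpace ℝ (Fin d × Fin N) => (0:EReal)) ∧
      LowerSemicontinuous (fun _ : EuclideanSpace ℝ (Fin d × Fin N) => (0:EReal)) ∧ (fun _ : EuclideanSpace ℝ (Fin d × Fin N) => (0:EReal)) ≤ g := by
    refine ⟨?_, lowerSemicontinuous_const, ?_⟩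
    · intro x y t ht0 ht1
      simp
    · intro η
      simp only [hgdef]
      exact_mod_cast Real.rpow_nonneg (hf0 η) p
  have h0 : ∀ η, 0 ≤ h η := by
    intro η
    exact le_iSup (fun s : {h : EuclideanSpace ℝ (Fin d × Fin N) → EReal // ERealConvexFn h ∧ LowerSemicontinuous h ∧ h ≤ g} =>
      (s : EuclideanSpace ℝ (Fin d × Fin N) → EReal) η) ⟨_, hzero⟩
  have hle : ∀ η, h η ≤ g η := fun η => iSup_le fun s => s.2.2.2 η
  have hnt : ∀ η, h η ≠ ⊤ := fun η => ne_top_of_le_ne_top (EReal.coe_ne_top _) (hle η)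
  have hnb : ∀ η, h η ≠ ⊥ := fun η => ne_bot_of_le_ne_bot (by simp) (h0 η)
  set a : EuclideanSpace ℝ (Fin d × Fin N) → ℝ := fun η => (h η).toReal with hadef
  have hcoe : ∀ η, h η = ((a η : ℝ) : EReal) := fun η => (EReal.coe_toReal (hnt η) (hnb η)).symm
  have ha0 : ∀ η, 0 ≤ a η := by
    intro η
    have := h0 η
    rw [hcoe η] at this
    exact_mod_cast this
  have haf : ∀ η, a η ≤ f η ^ p := by
    intro η
    have h2 : ((a η : ℝ) : EReal) ≤ ((f η ^ p : ℝ) : EReal) := (hcoe η) ▸ hle η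
    exact_mod_cast h2
  have hlsc : LowerSemicontinuous h :=
    lowerSemicontinuous_iSup fun s => s.2.2.1
  -- the candidate function
  set G : EuclideanSpace ℝ (Fin d × Fin N) → EReal := fun η => ((a η ^ (1/p) : ℝ) : EReal) with hGdef
  have hG0 : ∀ η, (0:EReal) ≤ G η := by
    intro η
    simp only [hGdef]
    exact_mod_cast Real.rpow_nonneg (ha0 η) _
  -- G is lower semicontinuous
  have hGlsc : LowerSemicontinuous G := by
    intro x c hc
    induction c with
    | bot =>
      filter_upwards with η
      exact lt_of_lt_of_le (by simp) (hG0 η)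
    | coe r =>
      rcases lt_or_ge r 0 with hr | hr
      · filter_upwards with η
        exact lt_of_lt_of_le (by exact_mod_cast hr) (hG0 η)
      · have hc' : ((r : ℝ) : EReal) < ((a x ^ (1/p) : ℝ) : EReal) := hc
        have hrx : r < a x ^ (1/p) := by exact_mod_cast hc'
        have hrp : r ^ p < a x := by
          have h1 : r ^ p < (a x ^ (1/p)) ^ p := Real.rpow_lt_rpow hr hrx hp0
          rwa [← Real.rpow_mul (ha0 x), one_div, inv_mul_cancel₀ (ne_of_gt hp0),
            Real.rpow_one] at h1
        have hrpE : ((r ^ p : ℝ) : EReal) < h x := by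
          rw [hcoe x]; exact_mod_cast hrp
        filter_upwards [hlsc x _ hrpE] with η hη
        have hη' : r ^ p < a η := by
          rw [hcoe η] at hη; exact_mod_cast hη
        have : r < a η ^ (1/p) := by
          have h1 : (r ^ p) ^ (1/p) < (a η) ^ (1/p) :=
            Real.rpow_lt_rpow (Real.rpow_nonneg hr p) hη' hip0
          rwa [← Real.rpow_mul hr, mul_one_div, div_self (ne_of_gt hp0),
            Real.rpow_one] at h1
        simp only [hGdef]
        exact_mod_cast this
    | top => exact absurd hc (not_top_lt)
  -- G is level convex
  have hGlc : LevelConvex G := by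
    intro x y t ht0 ht1
    have key : h (t • x + (1 - t) • y) ≤ max (h x) (h y) := by
      refine iSup_le fun s => ?_
      have hconv := s.2.1 x y t ht0 ht1
      have h1 : ((t : ℝ) : EReal) * (s : EuclideanSpace ℝ (Fin d × Fin N) → EReal) x ≤ ((t : ℝ) : EReal) * h x := by
        refine mul_le_mul_of_nonneg_left ?_ (by exact_mod_cast ht0.le)
        exact le_iSup (fun s : {h : EuclideanSpace ℝ (Fin d × Fin N) → EReal // ERealConvexFn h ∧ LowerSemicontinuous h ∧ h ≤ g} =>
          (s : EuclideanSpace ℝ (Fin d × Fin N) → EReal) x) s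
      have h2 : (((1 - t : ℝ)) : EReal) * (s : EuclideanSpace ℝ (Fin d × Fin N) → EReal) y ≤ (((1 - t : ℝ)) : EReal) * h y := by
        refine mul_le_mul_of_nonneg_left ?_ (by exact_mod_cast (by linarith : (0:ℝ) ≤ 1 - t))
        exact le_iSup (fun s : {h : EuclideanSpace ℝ (Fin d × Fin N) → EReal // ERealConvexFn h ∧ LowerSemicontinuous h ∧ h ≤ g} =>
          (s : EuclideanSpace ℝ (Fin d × Fin N) → EReal) y) s
      refine hconv.trans ((add_le_add h1 h2).trans ?_)
      rw [hcoe x, hcoe y, ← EReal.coe_mul, ← EReal.coe_mul, ← EReal.coe_add, ← hcm]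
      have hmax : t * a x + (1 - t) * a y ≤ max (a x) (a y) := by
        have hx := le_max_left (a x) (a y)
        have hy := le_max_right (a x) (a y)
        nlinarith
      exact_mod_cast hmax
    have ha' : a (t • x + (1 - t) • y) ≤ max (a x) (a y) := by
      rw [hcoe _, hcoe x, hcoe y, ← hcm] at key
      exact_mod_cast key
    have : a (t • x + (1 - t) • y) ^ (1/p) ≤ max (a x ^ (1/p)) (a y ^ (1/p)) := by
      rcases max_cases (a x) (a y) with ⟨he, _⟩ | ⟨he, _⟩ <;> rw [he] at ha'
      · exact le_max_of_le_left (Real.rpow_le_rpow (ha0 _) ha' hip0.le)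
      · exact le_max_of_le_right (Real.rpow_le_rpow (ha0 _) ha' hip0.le)
    simp only [hGdef]
    rw [← hcm]
    exact_mod_cast this
  -- G ≤ f
  have hGle : G ≤ fun η => ((f η : ℝ) : EReal) := by
    intro η
    have h1 : a η ^ (1/p) ≤ (f η ^ p) ^ (1/p) := Real.rpow_le_rpow (ha0 η) (haf η) hip0.le
    rw [← Real.rpow_mul (hf0 η), mul_one_div, div_self (ne_of_gt hp0), Real.rpow_one] at h1
    simp only [hGdef]
    exact_mod_cast h1
  have := le_iSup (fun s : {G : EuclideanSpace ℝ (Fin d × Fin N) → EReal // LowerSemicontinuous G ∧ LevelConvex G ∧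
      G ≤ fun η => ((f η : ℝ) : EReal)} => (s : EuclideanSpace ℝ (Fin d × Fin N) → EReal) ξ) ⟨G, hGlsc, hGlc, hGle⟩
  exact this
end
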